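/- arXiv:2001.01667 — 9 statements merged into one kernel-verified Lean document; each statement's English description precedes it below -/
import Mathlib

section
/- Fix finite alphabets 𝒳, 𝒴, 𝒵 and channels p_{Y|X}, p_{Z|X}. Let ℛ be the set of pairs (r₁, r_s) of nonnegative real numbers for which there exist finitely supported random variables W, U, X forming a Markov chain W → U → X → (Y,Z) with |𝒰| ≤ (|𝒳|+1)(|𝒳|+3) and |𝒲| ≤ |𝒳|+3, where conditionally on X the outputs satisfy Y ∼ p_{Y|X}(·|X) and Z ∼ p_{Z|X}(·|X), such that r_s + r₁ ≤ I(Y;U|W) + min( I(Y;W), I(Z;W) ) and r_s ≤ I(Y;U|W) − I(Z;U|W). Let ℛ' be defined identically except that the first inequality is replaced by r_s + r₁ ≤ I(Y;U,W). Then ℛ = ℛ'. -/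
open scoped BigOperators Classical

noncomputable section

/-- A stochastic map (conditional probability distribution). -/
def IsStochastic {B A : Type*} [Fintype A] (p : B → A → ℝ) : Prop :=
  (∀ b a, 0 ≤ p b a) ∧ ∀ b, ∑ a, p b a = 1

/-- Shannon entropy (base 2) of a finitely supported pmf. -/
def ent {A : Type*} [Fintype A] (p : A → ℝ) : ℝ := -∑ a, p a * Real.logb 2 (p a)

section MutualInformation

variable {𝒲 𝒰 𝒳' 𝒪 : Type*} [Fintype 𝒲] [Fintype 𝒰] [Fintype 𝒳'] [Fintype 𝒪]

/-- For the joint law `p(w,u,x,o) = q(w,u,x)·Ch(o|x)`: the mutual information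
`I(O; U, W) = H(O) + H(U,W) − H(O,U,W)`. -/
def miO_UW (q : 𝒲 × 𝒰 × 𝒳' → ℝ) (Ch : 𝒳' → 𝒪 → ℝ) : ℝ :=
  ent (fun o : 𝒪 => ∑ w, ∑ u, ∑ x, q (w, u, x) * Ch x o)
  + ent (fun p : 𝒰 × 𝒲 => ∑ x, q (p.2, p.1, x))
  - ent (fun p : 𝒪 × 𝒰 × 𝒲 => ∑ x, q (p.2.2, p.2.1, x) * Ch x p.1)

/-- The conditional mutual information `I(O; U | W) = H(O,W) + H(U,W) − H(O,U,W) − H(W)`. -/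
def miO_U_W (q : 𝒲 × 𝒰 × 𝒳' → ℝ) (Ch : 𝒳' → 𝒪 → ℝ) : ℝ :=
  ent (fun p : 𝒪 × 𝒲 => ∑ u, ∑ x, q (p.2, u, x) * Ch x p.1)
  + ent (fun p : 𝒰 × 𝒲 => ∑ x, q (p.2, p.1, x))
  - ent (fun p : 𝒪 × 𝒰 × 𝒲 => ∑ x, q (p.2.2, p.2.1, x) * Ch x p.1)
  - ent (fun w : 𝒲 => ∑ u, ∑ x, q (w, u, x))

/-- The mutual information `I(O; W) = H(O) + H(W) − H(O,W)`. -/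
def miO_W (q : 𝒲 × 𝒰 × 𝒳' → ℝ) (Ch : 𝒳' → 𝒪 → ℝ) : ℝ :=
  ent (fun o : 𝒪 => ∑ w, ∑ u, ∑ x, q (w, u, x) * Ch x o)
  + ent (fun w : 𝒲 => ∑ u, ∑ x, q (w, u, x))
  - ent (fun p : 𝒪 × 𝒲 => ∑ u, ∑ x, q (p.2, u, x) * Ch x p.1)

end MutualInformation

/-! By the chain rule `I(Y;U,W) = I(Y;U|W) + I(Y;W)`, the sum-rate bound of `ℛ` implies that of
`ℛ'`, and the two agree when `I(Y;W) ≤ I(Z;W)`. Otherwise replace `W` by a constant: since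
`W → U → X → Y` is a Markov chain, `I(Y;U) = I(Y;U,W)`, so the sum-rate bound of `ℛ'` becomes
that of `ℛ`, and the secrecy bound only grows because `I(Y;W) - I(Z;W) > 0` is added to it. -/

lemma ent_comp_equiv {A B : Type*} [Fintype A] [Fintype B] (e : A ≃ B) (p : B → ℝ) :
    ent (p ∘ e) = ent p := by
  unfold ent
  rw [← e.sum_comp]
  rfl

lemma ent_prod_unique {A B : Type*} [Fintype A] [Fintype B] [Unique B] (f : A × B → ℝ) :
    ent f = ent (fun a => f (a, default)) := by
  rw [← ent_comp_equiv (Equiv.prodUnique A B)]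
  congr 1
  funext t
  exact congrArg f (Prod.ext rfl (Unique.eq_default t.2))

lemma ent_of_unique {A : Type*} [Fintype A] [Unique A] {p : A → ℝ} (hp : p default = 1) :
    ent p = 0 := by
  simp [ent, hp]

lemma ent_mul_kernel {S T : Type*} [Fintype S] [Fintype T] (m : S → ℝ) (k : S → T → ℝ)
    (hk : ∀ s, ∑ t, k s t = 1) :
    ent (fun p : T × S => m p.2 * k p.2 p.1) = ent m + ∑ s, m s * ent (k s) := by
  have hlog : ∀ s t, m s * k s t * Real.logb 2 (m s * k s t)
      = k s t * (m s * Real.logb 2 (m s)) + m s * (k s t * Real.logb 2 (k s t)) := by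
    intro s t
    rcases eq_or_ne (m s) 0 with hm | hm
    · simp [hm]
    rcases eq_or_ne (k s t) 0 with hkt | hkt
    · simp [hkt]
    rw [Real.logb_mul hm hkt]
    ring
  unfold ent
  rw [Fintype.sum_prod_type, Finset.sum_comm]
  simp only [hlog, Finset.sum_add_distrib, ← Finset.sum_mul, ← Finset.mul_sum, hk, one_mul,
    mul_neg, Finset.sum_neg_distrib, neg_add]

section MutualInformation

variable {𝒲 𝒰 𝒳' 𝒪 : Type*} [Fintype 𝒲] [Fintype 𝒰] [Fintype 𝒳'] [Fintype 𝒪]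

lemma miO_UW_eq_miO_U_W_add_miO_W (q : 𝒲 × 𝒰 × 𝒳' → ℝ) (Ch : 𝒳' → 𝒪 → ℝ) :
    miO_UW q Ch = miO_U_W q Ch + miO_W q Ch := by
  unfold miO_UW miO_U_W miO_W
  ring

lemma miO_W_of_unique [Unique 𝒲] (q : 𝒲 × 𝒰 × 𝒳' → ℝ) (Ch : 𝒳' → 𝒪 → ℝ)
    (hq : ∑ u, ∑ x, q (default, u, x) = 1) :
    miO_W q Ch = 0 := by
  unfold miO_W
  rw [ent_of_unique (p := fun w : 𝒲 => ∑ u, ∑ x, q (w, u, x)) hq, ent_prod_unique]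
  simp only [Fintype.sum_unique]
  ring

lemma miO_UW_markov (a : 𝒲 × 𝒰 → ℝ) (b : 𝒰 → 𝒳' → ℝ) (Ch : 𝒳' → 𝒪 → ℝ)
    (hb : ∀ u, ∑ x, b u x = 1) (hCh : ∀ x, ∑ o, Ch x o = 1) :
    miO_UW (fun t => a (t.1, t.2.1) * b t.2.1 t.2.2) Ch
      = ent (fun o => ∑ u, (∑ w, a (w, u)) * ∑ x, b u x * Ch x o)
        - ∑ u, (∑ w, a (w, u)) * ent (fun o => ∑ x, b u x * Ch x o) := by
  set c : 𝒰 → 𝒪 → ℝ := fun u o => ∑ x, b u x * Ch x o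
  have hc : ∀ u, ∑ o, c u o = 1 := fun u => by
    simp only [c]
    rw [Finset.sum_comm]
    simp only [← Finset.mul_sum, hCh, mul_one, hb]
  have hO : (fun o => ∑ w, ∑ u, ∑ x, a (w, u) * b u x * Ch x o)
      = fun o => ∑ u, (∑ w, a (w, u)) * c u o := by
    funext o
    simp only [c, Finset.sum_mul, Finset.mul_sum, mul_assoc]
    rw [Finset.sum_comm]
    exact Finset.sum_congr rfl fun u _ => Finset.sum_comm
  have hUW : (fun p : 𝒰 × 𝒲 => ∑ x, a (p.2, p.1) * b p.1 x) = fun p => a (p.2, p.1) := by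
    funext p
    rw [← Finset.mul_sum, hb, mul_one]
  have hOUW : (fun p : 𝒪 × 𝒰 × 𝒲 => ∑ x, a (p.2.2, p.2.1) * b p.2.1 x * Ch x p.1)
      = fun p => a (p.2.2, p.2.1) * c p.2.1 p.1 := by
    funext p
    simp only [c, Finset.mul_sum, mul_assoc]
  unfold miO_UW
  rw [hO, hUW, hOUW, ent_mul_kernel (fun s : 𝒰 × 𝒲 => a (s.2, s.1)) (fun s => c s.1) (hc ·.1),
    Fintype.sum_prod_type]
  simp only [Finset.sum_mul]
  ring

lemma miO_W_collapse {𝒲₀ : Type*} [Fintype 𝒲₀] [Unique 𝒲₀] (a : 𝒲 × 𝒰 → ℝ)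
    (b : 𝒰 → 𝒳' → ℝ) (Ch : 𝒳' → 𝒪 → ℝ) (ha : ∑ t, a t = 1) (hb : ∀ u, ∑ x, b u x = 1) :
    miO_W (fun t : 𝒲₀ × 𝒰 × 𝒳' => (∑ w, a (w, t.2.1)) * b t.2.1 t.2.2) Ch = 0 := by
  refine miO_W_of_unique _ Ch ?_
  simp only [← Finset.mul_sum, hb, mul_one]
  rw [Finset.sum_comm, ← Fintype.sum_prod_type', ha]

lemma miO_U_W_collapse {𝒲₀ : Type*} [Fintype 𝒲₀] [Unique 𝒲₀] (a : 𝒲 × 𝒰 → ℝ)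
    (b : 𝒰 → 𝒳' → ℝ) (Ch : 𝒳' → 𝒪 → ℝ) (ha : ∑ t, a t = 1) (hb : ∀ u, ∑ x, b u x = 1)
    (hCh : ∀ x, ∑ o, Ch x o = 1) :
    miO_U_W (fun t : 𝒲₀ × 𝒰 × 𝒳' => (∑ w, a (w, t.2.1)) * b t.2.1 t.2.2) Ch
      = miO_UW (fun t => a (t.1, t.2.1) * b t.2.1 t.2.2) Ch := by
  rw [eq_sub_of_add_eq (miO_UW_eq_miO_U_W_add_miO_W _ Ch).symm, miO_W_collapse a b Ch ha hb,
    sub_zero, miO_UW_markov a b Ch hb hCh]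
  refine (miO_UW_markov (fun t : 𝒲₀ × 𝒰 => ∑ w, a (w, t.2)) b Ch hb hCh).trans ?_
  simp only [Fintype.sum_unique]

end MutualInformation

/-- Corollary `cor:ck1713`: the region `ℛ` of pairs `(r₁, r_s)` of
nonnegative reals for which there exist finitely supported random variables
`W, U, X` with Markov chain `W → U → X → (Y,Z)` (encoded by a pmf `a` on `𝒲 × 𝒰`
and a stochastic map `b ∈ P(𝒳|𝒰)`), `|𝒰| ≤ (|𝒳|+1)(|𝒳|+3)`, `|𝒲| ≤ |𝒳|+3`,
`r_s + r₁ ≤ I(Y;U|W) + min(I(Y;W), I(Z;W))` and `r_s ≤ I(Y;U|W) − I(Z;U|W)`,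
coincides with the region `ℛ'` defined identically except with the first
inequality replaced by `r_s + r₁ ≤ I(Y;U,W)`. -/
theorem statement6 {𝒳 𝒴 𝒵 : Type} [Fintype 𝒳] [Fintype 𝒴] [Fintype 𝒵]
    (Wc : 𝒳 → 𝒴 → ℝ) (Vc : 𝒳 → 𝒵 → ℝ)
    (hWc : IsStochastic Wc) (hVc : IsStochastic Vc) :
    { p : ℝ × ℝ | 0 ≤ p.1 ∧ 0 ≤ p.2 ∧
      ∃ wc uc : ℕ,
        uc ≤ (Fintype.card 𝒳 + 1) * (Fintype.card 𝒳 + 3) ∧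
        wc ≤ Fintype.card 𝒳 + 3 ∧
        ∃ (a : Fin wc × Fin uc → ℝ) (b : Fin uc → 𝒳 → ℝ),
          (∀ t, 0 ≤ a t) ∧ (∑ t, a t = 1) ∧ IsStochastic b ∧
          p.2 + p.1 ≤ miO_U_W (fun t => a (t.1, t.2.1) * b t.2.1 t.2.2) Wc
            + min (miO_W (fun t => a (t.1, t.2.1) * b t.2.1 t.2.2) Wc)
                  (miO_W (fun t => a (t.1, t.2.1) * b t.2.1 t.2.2) Vc) ∧
          p.2 ≤ miO_U_W (fun t => a (t.1, t.2.1) * b t.2.1 t.2.2) Wc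
            - miO_U_W (fun t => a (t.1, t.2.1) * b t.2.1 t.2.2) Vc }
    =
    { p : ℝ × ℝ | 0 ≤ p.1 ∧ 0 ≤ p.2 ∧
      ∃ wc uc : ℕ,
        uc ≤ (Fintype.card 𝒳 + 1) * (Fintype.card 𝒳 + 3) ∧
        wc ≤ Fintype.card 𝒳 + 3 ∧
        ∃ (a : Fin wc × Fin uc → ℝ) (b : Fin uc → 𝒳 → ℝ),
          (∀ t, 0 ≤ a t) ∧ (∑ t, a t = 1) ∧ IsStochastic b ∧
          p.2 + p.1 ≤ miO_UW (fun t => a (t.1, t.2.1) * b t.2.1 t.2.2) Wc ∧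
          p.2 ≤ miO_U_W (fun t => a (t.1, t.2.1) * b t.2.1 t.2.2) Wc
            - miO_U_W (fun t => a (t.1, t.2.1) * b t.2.1 t.2.2) Vc } := by
  ext ⟨r₁, rs⟩
  simp only [Set.mem_ofPred_eq]
  constructor
  · rintro ⟨h₁, hs, wc, uc, hu, hw, a, b, ha0, ha, hb, hsum, hsec⟩
    refine ⟨h₁, hs, wc, uc, hu, hw, a, b, ha0, ha, hb, hsum.trans ?_, hsec⟩
    rw [miO_UW_eq_miO_U_W_add_miO_W]
    exact add_le_add_right (min_le_left _ _) _
  · rintro ⟨h₁, hs, wc, uc, hu, hw, a, b, ha0, ha, hb, hsum, hsec⟩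
    set q := fun t : Fin wc × Fin uc × 𝒳 => a (t.1, t.2.1) * b t.2.1 t.2.2
    by_cases hWV : miO_W q Wc ≤ miO_W q Vc
    · refine ⟨h₁, hs, wc, uc, hu, hw, a, b, ha0, ha, hb, ?_, hsec⟩
      rwa [min_eq_left hWV, ← miO_UW_eq_miO_U_W_add_miO_W]
    refine ⟨h₁, hs, 1, uc, hu, by omega, fun t => ∑ w, a (w, t.2), b,
      fun t => Finset.sum_nonneg fun w _ => ha0 (w, t.2), ?_, hb, ?_, ?_⟩
    · rw [Fintype.sum_prod_type, Fin.sum_univ_one, Finset.sum_comm, ← Fintype.sum_prod_type', ha]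
    · rwa [miO_U_W_collapse a b Wc ha hb.2 hWc.2, miO_W_collapse a b Wc ha hb.2,
        miO_W_collapse a b Vc ha hb.2, min_self, add_zero]
    · rw [miO_U_W_collapse a b Wc ha hb.2 hWc.2, miO_U_W_collapse a b Vc ha hb.2 hVc.2,
        miO_UW_eq_miO_U_W_add_miO_W, miO_UW_eq_miO_U_W_add_miO_W]
      linarith [not_le.mp hWV]
end
end

section
/- Let A and B be random variables taking values in finite sets with joint probability mass function p, let c > 0 be real and n a positive integer. If I(A;B) ≤ c, then Pr( p_{A,B}(A,B) > p_A(A)·p_B(B)·2^{nc} ) ≤ 1/n + 1/(nc). -/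
/-!
Write `q = p_A · p_B`. On the event `p > q · 2^t` each summand `p log₂ (p / q)` of the mutual
information exceeds `t · p`, while every other summand is at least `-q`, because
`p log₂ (q / p) ≤ q`. Summing, `t · Pr(p > q · 2^t) ≤ I(A;B) + ∑ q ≤ c + 1`; take `t = n c`.
-/

namespace Real

lemma logb_two_le_self {y : ℝ} (hy : 0 ≤ y) : logb 2 y ≤ y := by
  rcases hy.eq_or_lt with rfl | hy
  · simp
  have hlog2 : 0 < log 2 := log_pos one_lt_two
  -- `log y ≤ y / e` and `1 / e < log 2`
  have hlog : exp 1 * log y ≤ y := by simpa [exp_log hy] using exp_one_mul_le_exp (x := log y)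
  have he : 1 < exp 1 * log 2 := by nlinarith [exp_one_gt_d9, log_two_gt_d9]
  rw [logb, div_le_iff₀ hlog2]
  rcases le_or_gt (log y) 0 with hneg | hpos
  · nlinarith
  · nlinarith [mul_le_mul_of_nonneg_right hlog hlog2.le]

lemma mul_logb_two_div_le {p q : ℝ} (hp : 0 ≤ p) (hq : 0 ≤ q) : p * logb 2 (q / p) ≤ q := by
  rcases hp.eq_or_lt with rfl | hp
  · simpa using hq
  calc p * logb 2 (q / p) ≤ p * (q / p) :=
        mul_le_mul_of_nonneg_left (logb_two_le_self (by positivity)) hp.le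
    _ = q := mul_div_cancel₀ q hp.ne'

lemma neg_le_mul_logb_two_div {p q : ℝ} (hp : 0 ≤ p) (hq : 0 ≤ q) :
    -q ≤ p * logb 2 (p / q) := by
  rw [← inv_div, logb_inv, mul_neg, neg_le_neg_iff]
  exact mul_logb_two_div_le hp hq

end Real

open Real

lemma mul_ite_rpow_lt_le {p q : ℝ} (hp : 0 ≤ p) (hq : 0 ≤ q) (hpq : 0 < p → 0 < q) (t : ℝ) :
    t * (if q * (2 : ℝ) ^ t < p then p else 0) ≤ p * logb 2 (p / q) + q := by
  split_ifs with hlt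
  · have hp : 0 < p := (mul_nonneg hq (by positivity)).trans_lt hlt
    have hq : 0 < q := hpq hp
    have ht : t < logb 2 (p / q) :=
      (lt_logb_iff_rpow_lt one_lt_two (by positivity)).2 ((lt_div_iff₀' hq).2 hlt)
    nlinarith
  · linarith [neg_le_mul_logb_two_div hp hq]

theorem mul_sum_ite_rpow_lt_le {ι : Type*} [Fintype ι] {p q : ι → ℝ} (hp : ∀ x, 0 ≤ p x)
    (hq : ∀ x, 0 ≤ q x) (hpq : ∀ x, 0 < p x → 0 < q x) (t : ℝ) :
    t * ∑ x, (if q x * (2 : ℝ) ^ t < p x then p x else 0) ≤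
      ∑ x, p x * logb 2 (p x / q x) + ∑ x, q x := by
  rw [Finset.mul_sum, ← Finset.sum_add_distrib]
  exact Finset.sum_le_sum fun x _ => mul_ite_rpow_lt_le (hp x) (hq x) (hpq x) t

section Marginals

variable {A B : Type*} [Fintype A] [Fintype B]

def marginalProduct (p : A × B → ℝ) (x : A × B) : ℝ :=
  (∑ b, p (x.1, b)) * (∑ a, p (a, x.2))

lemma sum_marginalProduct (p : A × B → ℝ) : ∑ x, marginalProduct p x = (∑ x, p x) ^ 2 := by
  simp only [marginalProduct, Fintype.sum_prod_type]
  rw [← Finset.sum_mul_sum, Finset.sum_comm (f := fun a b => p (a, b)), sq]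

variable {p : A × B → ℝ} (hp : ∀ x, 0 ≤ p x)
include hp

lemma marginalProduct_nonneg (x : A × B) : 0 ≤ marginalProduct p x :=
  mul_nonneg (Finset.sum_nonneg fun _ _ => hp _) (Finset.sum_nonneg fun _ _ => hp _)

lemma marginalProduct_pos {x : A × B} (hx : 0 < p x) : 0 < marginalProduct p x :=
  mul_pos (hx.trans_le (Finset.single_le_sum (f := fun b => p (x.1, b))
      (fun _ _ => hp _) (Finset.mem_univ x.2)))
    (hx.trans_le (Finset.single_le_sum (f := fun a => p (a, x.2))
      (fun _ _ => hp _) (Finset.mem_univ x.1)))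

end Marginals

/-- Lemma `lem:lai_strat2`: if `A, B` are random variables on finite
sets with joint pmf `p` and mutual information `I(A;B) ≤ c` (base-2 logarithm,
summed over the support), `c > 0`, and `n` is a positive integer, then
`Pr(p_{A,B}(A,B) > p_A(A)·p_B(B)·2^{nc}) ≤ 1/n + 1/(nc)`. -/
theorem statement9 {A B : Type} [Fintype A] [Fintype B]
    (p : A × B → ℝ) (hp0 : ∀ x, 0 ≤ p x) (hp1 : ∑ x, p x = 1)
    (c : ℝ) (hc : 0 < c) (n : ℕ) (hn : 0 < n)
    (hI : ∑ x : A × B,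
        p x * Real.logb 2 (p x / ((∑ b, p (x.1, b)) * (∑ a, p (a, x.2)))) ≤ c) :
    (∑ x : A × B,
        if (∑ b, p (x.1, b)) * (∑ a, p (a, x.2)) * (2 : ℝ) ^ ((n : ℝ) * c) < p x
        then p x else 0)
      ≤ 1 / (n : ℝ) + 1 / ((n : ℝ) * c) := by
  have ht : 0 < (n : ℝ) * c := mul_pos (Nat.cast_pos.2 hn) hc
  have hbound := mul_sum_ite_rpow_lt_le hp0 (marginalProduct_nonneg hp0)
    (fun _ => marginalProduct_pos hp0) ((n : ℝ) * c)
  rw [sum_marginalProduct, hp1, one_pow] at hbound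
  have hI' : ∑ x, p x * logb 2 (p x / marginalProduct p x) ≤ c := hI
  calc _ ≤ (c + 1) / ((n : ℝ) * c) := (le_div_iff₀' ht).2 (hbound.trans (by linarith))
    _ = 1 / (n : ℝ) + 1 / ((n : ℝ) * c) := by field_simp
end

section
/- Let n be a positive integer, r_s > 0 and ε > 0 real numbers, and 𝒦 a finite set with |𝒦| = 2^{n·r_s}. Let (K, Z) be jointly distributed random variables on 𝒦 × 𝒵 (𝒵 finite) with K uniformly distributed on 𝒦, and suppose I(K;Z) ≤ ε. Then for every stochastic map ψ ∈ P(𝒦∪{!} | 𝒵): Pr( ψ(K|Z) > 2^{−n(r_s − 2ε)} ) ≤ 1/n + 1/(nε) + 2^{−nε}. -/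
/-!
Let `q` be the product of the marginals of the joint law `p`; under `q`, `K` is uniform and
independent of `Z`. Each `ψ(·|z)` exceeds `t = 2^{-n(r_s-2ε)}` at no more than `t⁻¹` keys, so the
event `ψ(K|Z) > t` has `q`-probability at most `t⁻¹ / |𝒦|`. On that event either `p ≤ c q` with
`c = 2^{nε}`, which contributes at most `c t⁻¹ / |𝒦| = 2^{-nε}`, or `p > c q`. Markov's inequality
for the information density `log₂ (p / q)`, whose `p`-mean is `I(K;Z) ≤ ε` and whose negative part
has `p`-mean at most `1` (as `-y log₂ y ≤ 1 / (e ln 2) < 1`), gives `Pr_p(p > c q) · nε ≤ ε + 1`.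
-/

open scoped BigOperators Classical

noncomputable section

open Finset Real

theorem Real.logb_two_le_self_s10 {y : ℝ} (hy : 0 < y) : logb 2 y ≤ y := by
  have hlog : log y ≤ y / exp 1 := by
    simpa [exp_sub, exp_log hy] using add_one_le_exp (log y - 1)
  have hexp_log_two : 1 ≤ exp 1 * log 2 := by
    nlinarith [exp_one_gt_d9, log_two_gt_d9]
  rw [logb, div_le_iff₀ (log_pos one_lt_two)]
  calc log y ≤ y / exp 1 := hlog
    _ ≤ y / exp 1 * (exp 1 * log 2) := le_mul_of_one_le_right (by positivity) hexp_log_two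
    _ = y * log 2 := by field_simp

theorem Real.neg_mul_logb_div_le {a b : ℝ} (ha : 0 ≤ a) (hb : 0 ≤ b) (hab : b = 0 → a = 0) :
    -(a * logb 2 (a / b)) ≤ b := by
  rcases ha.eq_or_lt with rfl | ha
  · simpa using hb
  have hb : 0 < b := hb.lt_of_ne fun h ↦ ha.ne' (hab h.symm)
  calc -(a * logb 2 (a / b)) = a * logb 2 (b / a) := by rw [← inv_div, logb_inv]; ring
    _ ≤ a * (b / a) := by gcongr; exact logb_two_le_self_s10 (by positivity)
    _ = b := by field_simp

theorem card_filter_lt_le_inv {α : Type*} [Fintype α] {f : α → ℝ} (hf0 : ∀ a, 0 ≤ f a)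
    (hf1 : ∑ a, f a ≤ 1) {t : ℝ} (ht : 0 < t) : (#{a | t < f a} : ℝ) ≤ t⁻¹ := by
  rw [← one_div, le_div_iff₀ ht]
  calc (#{a | t < f a} : ℝ) * t = #{a | t < f a} • t := (nsmul_eq_mul _ _).symm
    _ ≤ ∑ a with t < f a, f a := card_nsmul_le_sum _ _ _ fun a ha ↦ (mem_filter.1 ha).2.le
    _ ≤ ∑ a, f a := sum_le_sum_of_subset_of_nonneg (subset_univ _) fun a _ _ ↦ hf0 a
    _ ≤ 1 := hf1

section Events

variable {ι : Type*} [Fintype ι]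

theorem sum_ite_le_mul_sum_ite_add (E : ι → Prop) [DecidablePred E] {p q : ι → ℝ}
    (hp : ∀ x, 0 ≤ p x) (hq : ∀ x, 0 ≤ q x) {c : ℝ} (hc : 0 ≤ c) :
    (∑ x, if E x then p x else 0) ≤
      c * (∑ x, if E x then q x else 0) + ∑ x, if c * q x < p x then p x else 0 := by
  rw [mul_sum, ← sum_add_distrib]
  refine sum_le_sum fun x _ ↦ ?_
  have := hp x
  have := mul_nonneg hc (hq x)
  split_ifs <;> linarith

theorem sum_ite_lt_mul_logb_le {p q : ι → ℝ} (hp : ∀ x, 0 ≤ p x) (hq : ∀ x, 0 ≤ q x)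
    (hpq : ∀ x, q x = 0 → p x = 0) {c : ℝ} (hc : 0 < c) :
    (∑ x, if c * q x < p x then p x else 0) * logb 2 c ≤
      ∑ x, p x * logb 2 (p x / q x) + ∑ x, q x := by
  rw [sum_mul, ← sum_add_distrib]
  refine sum_le_sum fun x _ ↦ ?_
  split_ifs with h
  · have hqx : 0 < q x := (hq x).lt_of_ne fun h0 ↦ by
      rw [← h0, mul_zero, hpq x h0.symm] at h; exact h.false
    have : logb 2 c ≤ logb 2 (p x / q x) :=
      logb_le_logb_of_le one_lt_two hc ((lt_div_iff₀ hqx).2 h).le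
    linarith [mul_le_mul_of_nonneg_left this (hp x), hq x]
  · linarith [neg_mul_logb_div_le (hp x) (hq x) (hpq x)]

end Events

theorem IsStochastic.sum_some_le_one {B A : Type*} [Fintype A] {ψ : B → Option A → ℝ}
    (hψ : IsStochastic ψ) (b : B) : ∑ a, ψ b (some a) ≤ 1 := by
  have := hψ.2 b
  rw [Fintype.sum_option] at this
  linarith [hψ.1 b none]

section Joint

variable {α β : Type*} [Fintype α] [Fintype β]

theorem sum_ite_lt_le_inv_mul_sum {f : β → α → ℝ} (hf0 : ∀ b a, 0 ≤ f b a)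
    (hf1 : ∀ b, ∑ a, f b a ≤ 1) {r : β → ℝ} (hr : ∀ b, 0 ≤ r b) {t : ℝ} (ht : 0 < t) :
    (∑ x : α × β, if t < f x.2 x.1 then r x.2 else 0) ≤ t⁻¹ * ∑ b, r b := by
  rw [Fintype.sum_prod_type, sum_comm, mul_sum]
  refine sum_le_sum fun b _ ↦ ?_
  dsimp only
  rw [sum_ite, sum_const_zero, add_zero, sum_const, nsmul_eq_mul]
  exact mul_le_mul_of_nonneg_right (card_filter_lt_le_inv (hf0 b) (hf1 b) ht) (hr b)

def marginalProd (p : α × β → ℝ) (x : α × β) : ℝ :=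
  (∑ b, p (x.1, b)) * ∑ a, p (a, x.2)

variable {p : α × β → ℝ}

theorem marginalProd_nonneg (hp : ∀ x, 0 ≤ p x) (x : α × β) : 0 ≤ marginalProd p x :=
  mul_nonneg (sum_nonneg fun _ _ ↦ hp _) (sum_nonneg fun _ _ ↦ hp _)

theorem eq_zero_of_marginalProd_eq_zero (hp : ∀ x, 0 ≤ p x) (x : α × β)
    (hx : marginalProd p x = 0) : p x = 0 := by
  have hfst : p x ≤ ∑ b, p (x.1, b) :=
    single_le_sum (f := fun b ↦ p (x.1, b)) (fun _ _ ↦ hp _) (mem_univ x.2)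
  have hsnd : p x ≤ ∑ a, p (a, x.2) :=
    single_le_sum (f := fun a ↦ p (a, x.2)) (fun _ _ ↦ hp _) (mem_univ x.1)
  rcases mul_eq_zero.1 hx with h | h <;> linarith [hp x]

theorem sum_marginalProd (hp1 : ∑ x, p x = 1) : ∑ x, marginalProd p x = 1 := by
  have hfst : ∑ a, ∑ b, p (a, b) = 1 := by rwa [← Fintype.sum_prod_type]
  have hsnd : ∑ b, ∑ a, p (a, b) = 1 := by rwa [sum_comm]
  simp only [marginalProd, Fintype.sum_prod_type, ← Fintype.sum_mul_sum, hfst, hsnd, one_mul]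

theorem sum_ite_lt_marginalProd_mul_logb_le (hp0 : ∀ x, 0 ≤ p x) (hp1 : ∑ x, p x = 1) {c : ℝ}
    (hc : 0 < c) :
    (∑ x, if c * marginalProd p x < p x then p x else 0) * logb 2 c ≤
      ∑ x, p x * logb 2 (p x / marginalProd p x) + 1 := by
  simpa only [sum_marginalProd hp1] using sum_ite_lt_mul_logb_le hp0 (marginalProd_nonneg hp0)
    (eq_zero_of_marginalProd_eq_zero hp0) hc

theorem sum_ite_lt_marginalProd_le_of_uniform (hp0 : ∀ x, 0 ≤ p x) (hp1 : ∑ x, p x = 1)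
    (hunif : ∀ a, ∑ b, p (a, b) = (Fintype.card α : ℝ)⁻¹) {ψ : β → Option α → ℝ}
    (hψ : IsStochastic ψ) {t : ℝ} (ht : 0 < t) :
    (∑ x, if t < ψ x.2 (some x.1) then marginalProd p x else 0) ≤
      t⁻¹ * (Fintype.card α : ℝ)⁻¹ := by
  have hsnd : ∑ b, ∑ a, p (a, b) = 1 := by rw [sum_comm, ← Fintype.sum_prod_type, hp1]
  have hQ := sum_ite_lt_le_inv_mul_sum (f := fun b a ↦ ψ b (some a)) (fun _ _ ↦ hψ.1 _ _)
    hψ.sum_some_le_one (r := fun b ↦ (Fintype.card α : ℝ)⁻¹ * ∑ a, p (a, b))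
    (fun _ ↦ mul_nonneg (by positivity) (sum_nonneg fun _ _ ↦ hp0 _)) ht
  simp only [← mul_sum, hsnd, mul_one] at hQ
  simpa only [marginalProd, hunif] using hQ

end Joint

theorem statement10_general {𝒦 𝒵 : Type} [Fintype 𝒦] [Fintype 𝒵]
    (n : ℕ) (hn : 0 < n) (rs ε : ℝ) (hε : 0 < ε)
    (hcard : (Fintype.card 𝒦 : ℝ) = (2 : ℝ) ^ ((n : ℝ) * rs))
    (p : 𝒦 × 𝒵 → ℝ) (hp0 : ∀ x, 0 ≤ p x) (hp1 : ∑ x, p x = 1)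
    (hunif : ∀ k, ∑ z, p (k, z) = (Fintype.card 𝒦 : ℝ)⁻¹)
    (hI : ∑ x : 𝒦 × 𝒵,
        p x * Real.logb 2 (p x / ((∑ z, p (x.1, z)) * (∑ k, p (k, x.2)))) ≤ ε)
    (ψ : 𝒵 → Option 𝒦 → ℝ) (hψ : IsStochastic ψ) :
    (∑ x : 𝒦 × 𝒵,
        if (2 : ℝ) ^ (-(n : ℝ) * (rs - 2 * ε)) < ψ x.2 (some x.1) then p x else 0)
      ≤ 1 / (n : ℝ) + 1 / ((n : ℝ) * ε) + (2 : ℝ) ^ (-(n : ℝ) * ε) := by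
  set t : ℝ := (2 : ℝ) ^ (-(n : ℝ) * (rs - 2 * ε))
  set c : ℝ := (2 : ℝ) ^ ((n : ℝ) * ε)
  have hevent : c * (∑ x, if t < ψ x.2 (some x.1) then marginalProd p x else 0) ≤
      (2 : ℝ) ^ (-(n : ℝ) * ε) := by
    calc _ ≤ c * (t⁻¹ * (Fintype.card 𝒦 : ℝ)⁻¹) := by
          gcongr
          exact sum_ite_lt_marginalProd_le_of_uniform hp0 hp1 hunif hψ (by positivity)
      _ = (2 : ℝ) ^ (-(n : ℝ) * ε) := by
          rw [hcard, ← rpow_neg zero_le_two, ← rpow_neg zero_le_two, ← rpow_add two_pos,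
            ← rpow_add two_pos]
          ring_nf
  have hdensity : (∑ x, if c * marginalProd p x < p x then p x else 0) ≤
      1 / (n : ℝ) + 1 / ((n : ℝ) * ε) := by
    have hmarkov := sum_ite_lt_marginalProd_mul_logb_le hp0 hp1 (c := c) (by positivity)
    rw [logb_rpow two_pos (by norm_num)] at hmarkov
    calc _ ≤ (ε + 1) / ((n : ℝ) * ε) := by
          rw [le_div_iff₀ (by positivity)]
          exact hmarkov.trans (add_le_add_left hI 1)
      _ = 1 / (n : ℝ) + 1 / ((n : ℝ) * ε) := by field_simp
  calc _ ≤ c * (∑ x, if t < ψ x.2 (some x.1) then marginalProd p x else 0) +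
        ∑ x, if c * marginalProd p x < p x then p x else 0 :=
        sum_ite_le_mul_sum_ite_add _ hp0 (marginalProd_nonneg hp0) (by positivity)
    _ ≤ _ := by linarith

/-- if `K` is uniform on a key set `𝒦` with `|𝒦| = 2^{n·r_s}`,
`(K, Z)` have joint pmf `p` with `I(K;Z) ≤ ε` (base-2 logarithm), then for every
stochastic map `ψ ∈ P(𝒦 ∪ {!} | 𝒵)`,
`Pr(ψ(K|Z) > 2^{−n(r_s − 2ε)}) ≤ 1/n + 1/(nε) + 2^{−nε}`. -/
theorem statement10 {𝒦 𝒵 : Type} [Fintype 𝒦] [Fintype 𝒵]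
    (n : ℕ) (hn : 0 < n) (rs ε : ℝ) (hrs : 0 < rs) (hε : 0 < ε)
    (hcard : (Fintype.card 𝒦 : ℝ) = (2 : ℝ) ^ ((n : ℝ) * rs))
    (p : 𝒦 × 𝒵 → ℝ) (hp0 : ∀ x, 0 ≤ p x) (hp1 : ∑ x, p x = 1)
    (hunif : ∀ k, ∑ z, p (k, z) = (Fintype.card 𝒦 : ℝ)⁻¹)
    (hI : ∑ x : 𝒦 × 𝒵,
        p x * Real.logb 2 (p x / ((∑ z, p (x.1, z)) * (∑ k, p (k, x.2)))) ≤ ε)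
    (ψ : 𝒵 → Option 𝒦 → ℝ) (hψ : IsStochastic ψ) :
    (∑ x : 𝒦 × 𝒵,
        if (2 : ℝ) ^ (-(n : ℝ) * (rs - 2 * ε)) < ψ x.2 (some x.1) then p x else 0)
      ≤ 1 / (n : ℝ) + 1 / ((n : ℝ) * ε) + (2 : ℝ) ^ (-(n : ℝ) * ε) :=
  statement10_general n hn rs ε hε hcard p hp0 hp1 hunif hI ψ hψ
end
end

section
/- For all real numbers t > 0 and u with 0 < u ≤ t, the inequality (u + t)·ln(1 + t/u) − t ≥ (2 ln 2 − 1)·t holds, with equality if and only if u = t. Equivalently, the minimum over u ∈ (0, t] of (u + t)·ln(1 + t/u) − t equals (2 ln 2 − 1)·t and is attained at u = t. -/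
/-! The map `u ↦ (u + t) log (1 + t / u)` has derivative `log (1 + t/u) - t/u`, which is negative
for `u > 0` because `log (1 + s) < s` for `s > 0`. Hence it is strictly decreasing on `(0, ∞)`,
and on `(0, t]` it is smallest exactly at `u = t`, where it equals `2 t log 2`. -/

open Real Set

theorem hasDerivAt_add_mul_log_one_add_div (t : ℝ) {u : ℝ} (hu : u ≠ 0) (hut : u + t ≠ 0) :
    HasDerivAt (fun u : ℝ => (u + t) * log (1 + t / u)) (log (1 + t / u) - t / u) u := by
  have hquot : HasDerivAt (fun u : ℝ => 1 + t / u) (-t / u ^ 2) u := by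
    simpa [div_eq_mul_inv] using ((hasDerivAt_inv hu).const_mul t).const_add 1
  have h : 1 + t / u ≠ 0 := by
    rw [one_add_div hu]
    exact div_ne_zero hut hu
  refine (((hasDerivAt_id' u).add_const t).mul (hquot.log h)).congr_deriv ?_
  field_simp
  ring

theorem strictAntiOn_add_mul_log_one_add_div {t : ℝ} (ht : 0 < t) :
    StrictAntiOn (fun u : ℝ => (u + t) * log (1 + t / u)) (Ioi 0) := by
  have hderiv : ∀ u ∈ Ioi (0 : ℝ),
      HasDerivAt (fun u : ℝ => (u + t) * log (1 + t / u)) (log (1 + t / u) - t / u) u :=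
    fun u (hu : 0 < u) => hasDerivAt_add_mul_log_one_add_div t hu.ne' (by linarith)
  refine strictAntiOn_of_deriv_neg (convex_Ioi 0)
    (fun u hu => (hderiv u hu).continuousAt.continuousWithinAt) fun u hu => ?_
  rw [interior_Ioi] at hu
  have hu : 0 < u := hu
  have hs : 0 < t / u := by positivity
  rw [(hderiv u hu).deriv]
  linarith [log_lt_sub_one_of_pos (by positivity : 0 < 1 + t / u) (by linarith : 1 + t / u ≠ 1)]

theorem add_mul_log_one_add_div_self (t : ℝ) (ht : t ≠ 0) :
    (t + t) * log (1 + t / t) = 2 * log 2 * t := by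
  rw [div_self ht]
  norm_num
  ring

/-- for real `t > 0` and `0 < u ≤ t`,
`(u + t)·ln(1 + t/u) − t ≥ (2 ln 2 − 1)·t`, with equality iff `u = t`;
equivalently the minimum over `u ∈ (0, t]` of `(u + t)·ln(1 + t/u) − t` equals
`(2 ln 2 − 1)·t` and is attained at `u = t`. -/
theorem statement14 (t : ℝ) (ht : 0 < t) :
    (∀ u : ℝ, 0 < u → u ≤ t →
      (2 * Real.log 2 - 1) * t ≤ (u + t) * Real.log (1 + t / u) - t) ∧
    (∀ u : ℝ, 0 < u → u ≤ t →
      ((u + t) * Real.log (1 + t / u) - t = (2 * Real.log 2 - 1) * t ↔ u = t)) ∧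
    IsLeast {v : ℝ | ∃ u : ℝ, 0 < u ∧ u ≤ t ∧ v = (u + t) * Real.log (1 + t / u) - t}
      ((2 * Real.log 2 - 1) * t) := by
  have hanti := strictAntiOn_add_mul_log_one_add_div ht
  have hmin : (t + t) * log (1 + t / t) - t = (2 * log 2 - 1) * t := by
    rw [add_mul_log_one_add_div_self t ht.ne']
    ring
  have hle : ∀ u : ℝ, 0 < u → u ≤ t →
      (2 * log 2 - 1) * t ≤ (u + t) * log (1 + t / u) - t := fun u hu hut => by
    have := hanti.antitoneOn (mem_Ioi.2 hu) (mem_Ioi.2 ht) hut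
    linarith
  refine ⟨hle, fun u hu _ => ?_, ⟨t, ht, le_rfl, hmin.symm⟩, ?_⟩
  · rw [← hmin, sub_left_inj]
    exact (hanti.eq_iff_eq (mem_Ioi.2 hu) (mem_Ioi.2 ht)).trans eq_comm
  · rintro v ⟨u, hu, hut, rfl⟩
    exact hle u hu hut
end

section
/- Let 𝒦 and 𝒵 be finite sets with 𝒦 nonempty, and let (K, Z) be jointly distributed random variables on 𝒦 × 𝒵 with joint pmf p. Then Σ_{z∈𝒵} p_Z(z)·max_{k∈𝒦} p_{K|Z}(k|z) ≥ 2^{−H(K|Z)}, where the sum is over z with p_Z(z) > 0. -/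
/-! Writing `a(k,z) = p(k,z) / p_Z(z)`, the quantity `2^{−H(K|Z)}` is the weighted geometric
mean `∏ a^p`, which by weighted AM–GM is at most the arithmetic mean `∑ p·a`. On each fibre
`z`, bounding `a(k,z)` by its maximum over `k` turns `∑_k p(k,z)·a(k,z)` into
`p_Z(z)·max_k a(k,z)`. -/

open scoped BigOperators Classical

noncomputable section

lemma rpow_sum_mul_logb_le_sum_mul {ι : Type*} (s : Finset ι) {b : ℝ} (hb₀ : 0 < b)
    (hb₁ : b ≠ 1) (w a : ι → ℝ) (hw : ∀ i ∈ s, 0 ≤ w i) (hw₁ : ∑ i ∈ s, w i = 1)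
    (ha : ∀ i ∈ s, 0 ≤ a i) (hwa : ∀ i ∈ s, w i ≠ 0 → a i ≠ 0) :
    b ^ (∑ i ∈ s, w i * Real.logb b (a i)) ≤ ∑ i ∈ s, w i * a i := by
  have hgeom : b ^ (∑ i ∈ s, w i * Real.logb b (a i)) = ∏ i ∈ s, a i ^ w i := by
    rw [Real.rpow_sum_of_pos hb₀]
    refine Finset.prod_congr rfl fun i hi => ?_
    by_cases hwi : w i = 0
    · simp [hwi]
    · have hai : 0 < a i := (ha i hi).lt_of_ne' (hwa i hi hwi)
      rw [mul_comm, Real.rpow_mul hb₀.le, Real.rpow_logb hb₀ hb₁ hai]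
  exact hgeom ▸ Real.geom_mean_le_arith_mean_weighted s w a hw hw₁ ha

lemma sum_mul_le_sum_mul_ciSup {ι : Type*} [Fintype ι] (q f : ι → ℝ) (hq : ∀ i, 0 ≤ q i) :
    ∑ i, q i * f i ≤ (∑ i, q i) * ⨆ i, f i := by
  rw [Finset.sum_mul]
  exact Finset.sum_le_sum fun i _ =>
    mul_le_mul_of_nonneg_left (le_ciSup (Set.finite_range f).bddAbove i) (hq i)

lemma sum_mul_div_sum_le {ι : Type*} [Fintype ι] (q : ι → ℝ) (hq : ∀ i, 0 ≤ q i) :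
    ∑ i, q i * (q i / ∑ j, q j) ≤
      if 0 < ∑ j, q j then (∑ j, q j) * ⨆ i, q i / ∑ j, q j else 0 := by
  split_ifs with hpos
  · exact sum_mul_le_sum_mul_ciSup q _ hq
  · have hzero : ∑ j, q j = 0 := le_antisymm (not_lt.mp hpos) (Finset.sum_nonneg fun j _ => hq j)
    simp [hzero]

theorem statement15_general {𝒦 𝒵 : Type} [Fintype 𝒦] [Fintype 𝒵]
    (p : 𝒦 × 𝒵 → ℝ) (hp0 : ∀ x, 0 ≤ p x) (hp1 : ∑ x, p x = 1) :
    (2 : ℝ) ^ (∑ k, ∑ z, p (k, z) * Real.logb 2 (p (k, z) / (∑ k', p (k', z))))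
      ≤ ∑ z, (if 0 < ∑ k', p (k', z)
          then (∑ k', p (k', z)) * (⨆ k, p (k, z) / ∑ k', p (k', z))
          else 0) := by
  set pZ : 𝒵 → ℝ := fun z => ∑ k', p (k', z)
  have hp_le : ∀ x, p x ≤ pZ x.2 := fun x =>
    Finset.single_le_sum (f := fun k => p (k, x.2)) (fun k _ => hp0 _) (Finset.mem_univ x.1)
  have hratio_ne : ∀ x ∈ Finset.univ, p x ≠ 0 → p x / pZ x.2 ≠ 0 := fun x _ hx =>
    div_ne_zero hx ((hp0 x).lt_of_ne' hx |>.trans_le (hp_le x)).ne'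
  calc (2 : ℝ) ^ (∑ k, ∑ z, p (k, z) * Real.logb 2 (p (k, z) / pZ z))
      = 2 ^ (∑ x, p x * Real.logb 2 (p x / pZ x.2)) := by rw [Fintype.sum_prod_type]
    _ ≤ ∑ x, p x * (p x / pZ x.2) :=
        rpow_sum_mul_logb_le_sum_mul _ two_pos (by norm_num) p _ (fun x _ => hp0 x) hp1
          (fun x _ => div_nonneg (hp0 x) ((hp0 x).trans (hp_le x))) hratio_ne
    _ = ∑ z, ∑ k, p (k, z) * (p (k, z) / pZ z) := Fintype.sum_prod_type_right _
    _ ≤ _ := Finset.sum_le_sum fun z _ => sum_mul_div_sum_le (fun k => p (k, z)) fun k => hp0 _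

/-- for jointly distributed `(K, Z)` on finite sets (𝒦 nonempty)
with joint pmf `p`, `Σ_z p_Z(z)·max_k p_{K|Z}(k|z) ≥ 2^{−H(K|Z)}`, where
`H(K|Z) = −Σ_{k,z} p(k,z)·log₂ p_{K|Z}(k|z)`, so that
`2^{−H(K|Z)} = 2^{Σ_{k,z} p(k,z)·log₂(p(k,z)/p_Z(z))}` (the sum on the left is
over `z` with `p_Z(z) > 0`). -/
theorem statement15 {𝒦 𝒵 : Type} [Fintype 𝒦] [Fintype 𝒵] [Nonempty 𝒦]
    (p : 𝒦 × 𝒵 → ℝ) (hp0 : ∀ x, 0 ≤ p x) (hp1 : ∑ x, p x = 1) :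
    (2 : ℝ) ^ (∑ k, ∑ z, p (k, z) * Real.logb 2 (p (k, z) / (∑ k', p (k', z))))
      ≤ ∑ z, (if 0 < ∑ k', p (k', z)
          then (∑ k', p (k', z)) * (⨆ k, p (k, z) / ∑ k', p (k', z))
          else 0) :=
  statement15_general p hp0 hp1
end
end

section
/- Let 𝒴, ℳ, 𝒦, 𝒯 be finite sets, let (Y, M, K, T) be random variables on 𝒴×ℳ×𝒦×𝒯 with joint pmf p, let φ ∈ P(ℳ∪{!} | 𝒴×𝒦) be a stochastic decoder, let n be a positive integer, let δ ≥ 0, λ > 0 and r ≥ 2λ be real numbers, and let D ⊆ 𝒴×𝒦×𝒯 be a set such that: (i) Pr( (Y,K,T) ∈ D ) ≥ 1 − 2^{−nλ}; (ii) Pr( p_{M|K,T}(M|K,T) > 2^{−nr + nλ} ) ≤ 2^{−nλ}; (iii) Σ_{y,m,k} p(y,m,k)·φ(m|y,k) ≥ 1 − δ. Define τ(m,k,t) = Σ_{y : (y,k,t) ∈ D} p_{Y|K,T}(y|k,t)·φ(ℳ∖{m}|y,k) and ν = δ + 3·2^{−nλ}, and assume ν ≤ 1. Then Pr( τ(M,K,T)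 < 1 − √ν ) ≤ √ν. -/
open scoped BigOperators Classical

noncomputable section

set_option linter.unusedSectionVars false
set_option linter.unusedVariables false
set_option maxHeartbeats 1000000

namespace St16

lemma rot3 {A B C : Type} [Fintype A] [Fintype B] [Fintype C] (f : A → B → C → ℝ) :
    ∑ a, ∑ b, ∑ c, f a b c = ∑ b, ∑ c, ∑ a, f a b c := by
  rw [Finset.sum_comm]
  exact Finset.sum_congr rfl fun b _ => Finset.sum_comm

lemma rot4 {A B C D : Type} [Fintype A] [Fintype B] [Fintype C] [Fintype D]
    (f : A → B → C → D → ℝ) :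
    ∑ a, ∑ b, ∑ c, ∑ d, f a b c d = ∑ b, ∑ c, ∑ d, ∑ a, f a b c d := by
  rw [Finset.sum_comm]
  exact Finset.sum_congr rfl fun b _ => rot3 _

variable {𝒴 ℳ 𝒦 𝒯 : Type} [Fintype 𝒴] [Fintype ℳ] [Fintype 𝒦] [Fintype 𝒯]

/-- marginal of (M,K,T) -/
def Qm (p : 𝒴 × ℳ × 𝒦 × 𝒯 → ℝ) (m : ℳ) (k : 𝒦) (t : 𝒯) : ℝ := ∑ y, p (y, m, k, t)

/-- marginal of (Y,K,T) -/
def PY (p : 𝒴 × ℳ × 𝒦 × 𝒯 → ℝ) (y : 𝒴) (k : 𝒦) (t : 𝒯) : ℝ := ∑ m', p (y, m', k, t)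

/-- marginal of (K,T) -/
def S (p : 𝒴 × ℳ × 𝒦 × 𝒯 → ℝ) (k : 𝒦) (t : 𝒯) : ℝ := ∑ y', ∑ m', p (y', m', k, t)

def φe (φ : 𝒴 × 𝒦 → Option ℳ → ℝ) (m : ℳ) (y : 𝒴) (k : 𝒦) : ℝ :=
  ∑ m' ∈ Finset.univ.erase m, φ (y, k) (some m')

def tau (p : 𝒴 × ℳ × 𝒦 × 𝒯 → ℝ) (φ : 𝒴 × 𝒦 → Option ℳ → ℝ) (D : Set (𝒴 × 𝒦 × 𝒯))
    (m : ℳ) (k : 𝒦) (t : 𝒯) : ℝ :=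
  ∑ y, (if (y, k, t) ∈ D then (PY p y k t / S p k t) * φe φ m y k else 0)

section basic

variable (p : 𝒴 × ℳ × 𝒦 × 𝒯 → ℝ) (φ : 𝒴 × 𝒦 → Option ℳ → ℝ) (D : Set (𝒴 × 𝒦 × 𝒯))

lemma Qm_nonneg (hp0 : ∀ x, 0 ≤ p x) (m : ℳ) (k : 𝒦) (t : 𝒯) : 0 ≤ Qm p m k t :=
  Finset.sum_nonneg fun _ _ => hp0 _

lemma PY_nonneg (hp0 : ∀ x, 0 ≤ p x) (y : 𝒴) (k : 𝒦) (t : 𝒯) : 0 ≤ PY p y k t :=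
  Finset.sum_nonneg fun _ _ => hp0 _

lemma S_nonneg (hp0 : ∀ x, 0 ≤ p x) (k : 𝒦) (t : 𝒯) : 0 ≤ S p k t :=
  Finset.sum_nonneg fun _ _ => Finset.sum_nonneg fun _ _ => hp0 _

lemma frac_nonneg (hp0 : ∀ x, 0 ≤ p x) (y : 𝒴) (k : 𝒦) (t : 𝒯) :
    0 ≤ PY p y k t / S p k t :=
  div_nonneg (PY_nonneg p hp0 y k t) (S_nonneg p hp0 k t)

lemma sum_frac_le_one (k : 𝒦) (t : 𝒯) :
    ∑ y, PY p y k t / S p k t ≤ 1 := by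
  rw [← Finset.sum_div]
  exact div_self_le_one _

lemma S_mul_frac_le (hp0 : ∀ x, 0 ≤ p x) (y : 𝒴) (k : 𝒦) (t : 𝒯) :
    S p k t * (PY p y k t / S p k t) ≤ PY p y k t := by
  rcases eq_or_ne (S p k t) 0 with h | h
  · simp [h]
    exact PY_nonneg p hp0 y k t
  · rw [mul_comm, div_mul_cancel₀ _ h]

lemma sum_Qm (k : 𝒦) (t : 𝒯) : ∑ m, Qm p m k t = S p k t := Finset.sum_comm

lemma φe_add (hφ : IsStochastic φ) (m : ℳ) (y : 𝒴) (k : 𝒦) :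
    φ (y, k) none + (φe φ m y k + φ (y, k) (some m)) = 1 := by
  have h1 := hφ.2 (y, k)
  rw [Fintype.sum_option] at h1
  rw [φe, Finset.sum_erase_add _ _ (Finset.mem_univ m)]
  exact h1

lemma φe_nonneg (hφ : IsStochastic φ) (m : ℳ) (y : 𝒴) (k : 𝒦) : 0 ≤ φe φ m y k :=
  Finset.sum_nonneg fun _ _ => hφ.1 _ _

lemma φe_le_one (hφ : IsStochastic φ) (m : ℳ) (y : 𝒴) (k : 𝒦) : φe φ m y k ≤ 1 := by
  have := φe_add φ hφ m y k
  have h1 := hφ.1 (y, k) none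
  have h2 := hφ.1 (y, k) (some m)
  linarith

lemma φ_some_le_one (hφ : IsStochastic φ) (m : ℳ) (y : 𝒴) (k : 𝒦) :
    φ (y, k) (some m) ≤ 1 := by
  have := φe_add φ hφ m y k
  have h1 := hφ.1 (y, k) none
  have h2 := φe_nonneg φ hφ m y k
  linarith

lemma sum_φ_some_le_one (hφ : IsStochastic φ) (y : 𝒴) (k : 𝒦) :
    ∑ m, φ (y, k) (some m) ≤ 1 := by
  have h1 := hφ.2 (y, k)
  rw [Fintype.sum_option] at h1
  have h2 := hφ.1 (y, k) none
  linarith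

lemma tau_le_one (hp0 : ∀ x, 0 ≤ p x) (hφ : IsStochastic φ) (m : ℳ) (k : 𝒦) (t : 𝒯) :
    tau p φ D m k t ≤ 1 := by
  refine le_trans (Finset.sum_le_sum (fun y _ => ?_)) (sum_frac_le_one p k t)
  split_ifs with h
  · exact mul_le_of_le_one_right (frac_nonneg p hp0 y k t) (φe_le_one φ hφ m y k)
  · exact frac_nonneg p hp0 y k t

/-- expansion of Q·(1-τ) -/
lemma hC1 (hp0 : ∀ x, 0 ≤ p x) (hφ : IsStochastic φ) (m : ℳ) (k : 𝒦) (t : 𝒯) :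
    Qm p m k t * (1 - tau p φ D m k t) =
      ∑ y, (if (y, k, t) ∈ D
        then Qm p m k t * (PY p y k t / S p k t) * (φ (y, k) none + φ (y, k) (some m))
        else Qm p m k t * (PY p y k t / S p k t)) := by
  by_cases hS : S p k t = 0
  · have hpz : ∀ y m', p (y, m', k, t) = 0 := by
      intro y m'
      have h1 := (Finset.sum_eq_zero_iff_of_nonneg
        (fun y _ => PY_nonneg p hp0 y k t)).mp hS y (Finset.mem_univ y)
      exact (Finset.sum_eq_zero_iff_of_nonneg
        (fun m'' _ => hp0 _)).mp h1 m' (Finset.mem_univ m')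
    have hQz : Qm p m k t = 0 := Finset.sum_eq_zero fun y _ => hpz y m
    have hPYz : ∀ y, PY p y k t = 0 := fun y => Finset.sum_eq_zero fun m' _ => hpz y m'
    rw [hQz, zero_mul]
    symm
    refine Finset.sum_eq_zero fun y _ => ?_
    rw [hPYz y]
    simp
  · have hone : ∑ y, PY p y k t / S p k t = 1 := by
      rw [← Finset.sum_div]
      exact div_self hS
    calc Qm p m k t * (1 - tau p φ D m k t)
        = ∑ y, (Qm p m k t * (PY p y k t / S p k t) -
            (if (y, k, t) ∈ D then Qm p m k t * ((PY p y k t / S p k t) * φe φ m y k)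
              else 0)) := by
          rw [Finset.sum_sub_distrib, ← Finset.mul_sum, hone, mul_one, mul_one_sub]
          congr 1
          rw [tau, Finset.mul_sum]
          exact Finset.sum_congr rfl fun y _ => by
            split_ifs with h
            · ring
            · exact mul_zero _
      _ = _ := by
          refine Finset.sum_congr rfl fun y _ => ?_
          by_cases h : (y, k, t) ∈ D
          · simp only [if_pos h]
            have hadd := φe_add φ hφ m y k
            have hsub : φ (y, k) none + φ (y, k) (some m) = 1 - φe φ m y k := by linarith
            rw [hsub]
            ring
          · simp only [if_neg h, sub_zero]

lemma expand_p (hp1 : ∑ x, p x = 1) : ∑ y, ∑ m, ∑ k, ∑ t, p (y, m, k, t) = 1 := by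
  rw [← hp1]
  simp [Fintype.sum_prod_type]

lemma PY_sum_one (hp1 : ∑ x, p x = 1) : ∑ k, ∑ t, ∑ y, PY p y k t = 1 := by
  calc ∑ k, ∑ t, ∑ y, PY p y k t
      = ∑ k, ∑ t, ∑ y, ∑ m, p (y, m, k, t) := rfl
    _ = ∑ t, ∑ y, ∑ m, ∑ k, p (y, m, k, t) := rot4 _
    _ = ∑ y, ∑ m, ∑ k, ∑ t, p (y, m, k, t) := rot4 _
    _ = 1 := expand_p p hp1

lemma outD_le (ε : ℝ) (hp0 : ∀ x, 0 ≤ p x) (hp1 : ∑ x, p x = 1)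
    (hD : 1 - ε ≤ ∑ x : 𝒴 × ℳ × 𝒦 × 𝒯, (if (x.1, x.2.2.1, x.2.2.2) ∈ D then p x else 0)) :
    ∑ k, ∑ t, ∑ y, (if (y, k, t) ∈ D then 0 else PY p y k t) ≤ ε := by
  have hD' : 1 - ε ≤ ∑ y, ∑ m, ∑ k, ∑ t, (if (y, k, t) ∈ D then p (y, m, k, t) else 0) := by
    refine le_trans hD (le_of_eq ?_)
    simp [Fintype.sum_prod_type]
  have key : ∑ y, ∑ m, ∑ k, ∑ t, (if (y, k, t) ∈ D then 0 else p (y, m, k, t)) ≤ ε := by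
    have hsum : (∑ y, ∑ m, ∑ k, ∑ t, (if (y, k, t) ∈ D then p (y, m, k, t) else 0))
        + (∑ y, ∑ m, ∑ k, ∑ t, (if (y, k, t) ∈ D then 0 else p (y, m, k, t))) = 1 := by
      simp only [← Finset.sum_add_distrib]
      rw [← expand_p p hp1]
      refine Finset.sum_congr rfl fun y _ => Finset.sum_congr rfl fun m _ =>
        Finset.sum_congr rfl fun k _ => Finset.sum_congr rfl fun t _ => ?_
      split_ifs <;> simp
    linarith
  calc ∑ k, ∑ t, ∑ y, (if (y, k, t) ∈ D then 0 else PY p y k t)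
      = ∑ k, ∑ t, ∑ y, ∑ m, (if (y, k, t) ∈ D then 0 else p (y, m, k, t)) := by
        refine Finset.sum_congr rfl fun k _ => Finset.sum_congr rfl fun t _ =>
          Finset.sum_congr rfl fun y _ => ?_
        split_ifs with h
        · simp
        · rfl
    _ = ∑ t, ∑ y, ∑ m, ∑ k, (if (y, k, t) ∈ D then 0 else p (y, m, k, t)) := rot4 _
    _ = ∑ y, ∑ m, ∑ k, ∑ t, (if (y, k, t) ∈ D then 0 else p (y, m, k, t)) := rot4 _
    _ ≤ ε := key

lemma dec_bound (hp0 : ∀ x, 0 ≤ p x) (hφ : IsStochastic φ) (δ : ℝ)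
    (hdec : 1 - δ ≤ ∑ y, ∑ m, ∑ k, (∑ t, p (y, m, k, t)) * φ (y, k) (some m)) :
    1 - δ ≤ ∑ k, ∑ t, ∑ y, PY p y k t * ∑ m, φ (y, k) (some m) := by
  have h1 : ∑ y, ∑ m, ∑ k, (∑ t, p (y, m, k, t)) * φ (y, k) (some m)
      = ∑ y, ∑ m, ∑ k, ∑ t, p (y, m, k, t) * φ (y, k) (some m) := by
    refine Finset.sum_congr rfl fun y _ => Finset.sum_congr rfl fun m _ =>
      Finset.sum_congr rfl fun k _ => ?_
    rw [Finset.sum_mul]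
  have h2 : ∑ y, ∑ m, ∑ k, ∑ t, p (y, m, k, t) * φ (y, k) (some m)
      = ∑ k, ∑ t, ∑ y, ∑ m, p (y, m, k, t) * φ (y, k) (some m) :=
    (rot4 _).trans (rot4 _)
  have h3 : ∑ k, ∑ t, ∑ y, ∑ m, p (y, m, k, t) * φ (y, k) (some m)
      ≤ ∑ k, ∑ t, ∑ y, PY p y k t * ∑ m, φ (y, k) (some m) := by
    refine Finset.sum_le_sum fun k _ => Finset.sum_le_sum fun t _ =>
      Finset.sum_le_sum fun y _ => ?_
    rw [Finset.mul_sum]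
    refine Finset.sum_le_sum fun m _ => ?_
    refine mul_le_mul_of_nonneg_right ?_ (hφ.1 _ _)
    exact Finset.single_le_sum (fun m' _ => hp0 (y, m', k, t)) (Finset.mem_univ m)
  linarith [h1 ▸ hdec, h2 ▸ (h1 ▸ hdec)]

end basic

end St16

/-- Lemma `lem:pre:c:2`: let `(Y, M, K, T)` have joint pmf `p`,
`φ` a stochastic decoder, `n ≥ 1`, `δ ≥ 0`, `λ > 0`, `r ≥ 2λ`, and
`D ⊆ 𝒴 × 𝒦 × 𝒯` with (i) `Pr((Y,K,T) ∈ D) ≥ 1 − 2^{−nλ}`,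
(ii) `Pr(p_{M|K,T}(M|K,T) > 2^{−nr+nλ}) ≤ 2^{−nλ}`, and
(iii) `Σ_{y,m,k} p(y,m,k)·φ(m|y,k) ≥ 1 − δ`.  With
`τ(m,k,t) = Σ_{y : (y,k,t) ∈ D} p_{Y|K,T}(y|k,t)·φ(ℳ∖{m}|y,k)` and
`ν = δ + 3·2^{−nλ} ≤ 1`, we have `Pr(τ(M,K,T) < 1 − √ν) ≤ √ν`. -/
theorem statement16 {𝒴 ℳ 𝒦 𝒯 : Type} [Fintype 𝒴] [Fintype ℳ] [Fintype 𝒦] [Fintype 𝒯]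
    (p : 𝒴 × ℳ × 𝒦 × 𝒯 → ℝ) (hp0 : ∀ x, 0 ≤ p x) (hp1 : ∑ x, p x = 1)
    (φ : 𝒴 × 𝒦 → Option ℳ → ℝ) (hφ : IsStochastic φ)
    (n : ℕ) (hn : 0 < n) (δ lam r : ℝ) (hδ : 0 ≤ δ) (hlam : 0 < lam) (hr : 2 * lam ≤ r)
    (D : Set (𝒴 × 𝒦 × 𝒯))
    (hD : 1 - (2 : ℝ) ^ (-(n : ℝ) * lam) ≤
      ∑ x : 𝒴 × ℳ × 𝒦 × 𝒯, (if (x.1, x.2.2.1, x.2.2.2) ∈ D then p x else 0))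
    (hM : (∑ m, ∑ k, ∑ t,
        (if (2 : ℝ) ^ (-(n : ℝ) * r + (n : ℝ) * lam) <
            (∑ y, p (y, m, k, t)) / (∑ y, ∑ m', p (y, m', k, t))
          then ∑ y, p (y, m, k, t) else 0)) ≤ (2 : ℝ) ^ (-(n : ℝ) * lam))
    (hdec : 1 - δ ≤ ∑ y, ∑ m, ∑ k, (∑ t, p (y, m, k, t)) * φ (y, k) (some m))
    (ν : ℝ) (hν : ν = δ + 3 * (2 : ℝ) ^ (-(n : ℝ) * lam)) (hν1 : ν ≤ 1) :
    (∑ m, ∑ k, ∑ t,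
        (if (∑ y, (if (y, k, t) ∈ D
              then ((∑ m', p (y, m', k, t)) / (∑ y', ∑ m', p (y', m', k, t)))
                * (∑ m' ∈ Finset.univ.erase m, φ (y, k) (some m'))
              else 0)) < 1 - Real.sqrt ν
          then ∑ y, p (y, m, k, t) else 0)) ≤ Real.sqrt ν := by
  classical
  show (∑ m, ∑ k, ∑ t,
      (if St16.tau p φ D m k t < 1 - Real.sqrt ν then St16.Qm p m k t else 0)) ≤ Real.sqrt ν
  set ε : ℝ := (2 : ℝ) ^ (-(n : ℝ) * lam) with hεdef
  set εr : ℝ := (2 : ℝ) ^ (-(n : ℝ) * r + (n : ℝ) * lam) with hεrdef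
  have hεpos : 0 < ε := Real.rpow_pos_of_pos two_pos _
  have hεrpos : 0 < εr := Real.rpow_pos_of_pos two_pos _
  have hεrle : εr ≤ ε := by
    apply Real.rpow_le_rpow_of_exponent_le one_le_two
    have hn0 : (0 : ℝ) ≤ (n : ℝ) := Nat.cast_nonneg n
    nlinarith
  have hνpos : 0 < ν := by rw [hν]; linarith
  have hsν : 0 < Real.sqrt ν := Real.sqrt_pos.mpr hνpos
  -- pointwise master bound
  have hPW : ∀ (m : ℳ) (k : 𝒦) (t : 𝒯) (y : 𝒴),
      (if (y, k, t) ∈ D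
        then St16.Qm p m k t * (St16.PY p y k t / St16.S p k t) *
          (φ (y, k) none + φ (y, k) (some m))
        else St16.Qm p m k t * (St16.PY p y k t / St16.S p k t))
      ≤ (if (y, k, t) ∈ D then 0 else St16.Qm p m k t * (St16.PY p y k t / St16.S p k t))
        + St16.Qm p m k t * ((St16.PY p y k t / St16.S p k t) * φ (y, k) none)
        + (if εr < St16.Qm p m k t / St16.S p k t then St16.Qm p m k t else 0)
            * ((St16.PY p y k t / St16.S p k t) * φ (y, k) (some m))
        + εr * (St16.PY p y k t * φ (y, k) (some m)) := by
    intro m k t y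
    have hQ0 := St16.Qm_nonneg p hp0 m k t
    have hf0 := St16.frac_nonneg p hp0 y k t
    have hPY0 := St16.PY_nonneg p hp0 y k t
    have hφn := hφ.1 (y, k) none
    have hφm := hφ.1 (y, k) (some m)
    have key : St16.Qm p m k t * ((St16.PY p y k t / St16.S p k t) * φ (y, k) (some m))
        ≤ (if εr < St16.Qm p m k t / St16.S p k t then St16.Qm p m k t else 0)
            * ((St16.PY p y k t / St16.S p k t) * φ (y, k) (some m))
          + εr * (St16.PY p y k t * φ (y, k) (some m)) := by
      by_cases hc : εr < St16.Qm p m k t / St16.S p k t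
      · rw [if_pos hc]
        have h4 : 0 ≤ εr * (St16.PY p y k t * φ (y, k) (some m)) := by positivity
        linarith
      · rw [if_neg hc, zero_mul, zero_add]
        push_neg at hc
        have heq : St16.Qm p m k t * ((St16.PY p y k t / St16.S p k t) * φ (y, k) (some m))
            = (St16.Qm p m k t / St16.S p k t) * (St16.PY p y k t * φ (y, k) (some m)) := by
          ring
        rw [heq]
        exact mul_le_mul_of_nonneg_right hc (by positivity)
    by_cases h : (y, k, t) ∈ D
    · rw [if_pos h, if_pos h]
      have hexp : St16.Qm p m k t * (St16.PY p y k t / St16.S p k t) *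
          (φ (y, k) none + φ (y, k) (some m))
          = St16.Qm p m k t * ((St16.PY p y k t / St16.S p k t) * φ (y, k) none)
            + St16.Qm p m k t * ((St16.PY p y k t / St16.S p k t) * φ (y, k) (some m)) := by
        ring
      linarith
    · rw [if_neg h, if_neg h]
      have h2 : 0 ≤ St16.Qm p m k t * ((St16.PY p y k t / St16.S p k t) * φ (y, k) none) := by
        positivity
      have h3 : 0 ≤ St16.Qm p m k t * ((St16.PY p y k t / St16.S p k t) * φ (y, k) (some m)) := by
        positivity
      linarith
  -- bound 1
  have hB1 : ∑ m, ∑ k, ∑ t, ∑ y,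
      (if (y, k, t) ∈ D then 0 else St16.Qm p m k t * (St16.PY p y k t / St16.S p k t)) ≤ ε := by
    calc ∑ m, ∑ k, ∑ t, ∑ y,
        (if (y, k, t) ∈ D then 0 else St16.Qm p m k t * (St16.PY p y k t / St16.S p k t))
        = ∑ k, ∑ t, ∑ y, ∑ m,
          (if (y, k, t) ∈ D then 0 else St16.Qm p m k t * (St16.PY p y k t / St16.S p k t)) :=
          St16.rot4 _
      _ ≤ ∑ k, ∑ t, ∑ y, (if (y, k, t) ∈ D then 0 else St16.PY p y k t) := by
          refine Finset.sum_le_sum fun k _ => Finset.sum_le_sum fun t _ =>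
            Finset.sum_le_sum fun y _ => ?_
          by_cases h : (y, k, t) ∈ D
          · simp [h]
          · simp only [if_neg h]
            rw [← Finset.sum_mul, St16.sum_Qm]
            exact St16.S_mul_frac_le p hp0 y k t
      _ ≤ ε := St16.outD_le p D ε hp0 hp1 hD
  -- bound 2
  have hB2 : ∑ m, ∑ k, ∑ t, ∑ y,
      St16.Qm p m k t * ((St16.PY p y k t / St16.S p k t) * φ (y, k) none) ≤ δ := by
    have hPY1 := St16.PY_sum_one p hp1
    have hdec' := St16.dec_bound p φ hp0 hφ δ hdec
    calc ∑ m, ∑ k, ∑ t, ∑ y,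
        St16.Qm p m k t * ((St16.PY p y k t / St16.S p k t) * φ (y, k) none)
        = ∑ k, ∑ t, ∑ y, ∑ m,
          St16.Qm p m k t * ((St16.PY p y k t / St16.S p k t) * φ (y, k) none) := St16.rot4 _
      _ ≤ ∑ k, ∑ t, ∑ y, St16.PY p y k t * φ (y, k) none := by
          refine Finset.sum_le_sum fun k _ => Finset.sum_le_sum fun t _ =>
            Finset.sum_le_sum fun y _ => ?_
          rw [← Finset.sum_mul, St16.sum_Qm, ← mul_assoc]
          exact mul_le_mul_of_nonneg_right (St16.S_mul_frac_le p hp0 y k t) (hφ.1 (y, k) none)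
      _ ≤ δ := by
          have heq : ∀ (k : 𝒦) (t : 𝒯) (y : 𝒴), St16.PY p y k t * φ (y, k) none
              = St16.PY p y k t - St16.PY p y k t * ∑ m, φ (y, k) (some m) := by
            intro k t y
            have h1 := hφ.2 (y, k)
            rw [Fintype.sum_option] at h1
            have h2 : φ (y, k) none = 1 - ∑ m, φ (y, k) (some m) := by linarith
            rw [h2]; ring
          calc ∑ k, ∑ t, ∑ y, St16.PY p y k t * φ (y, k) none
              = ∑ k, ∑ t, ∑ y,
                (St16.PY p y k t - St16.PY p y k t * ∑ m, φ (y, k) (some m)) := by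
                exact Finset.sum_congr rfl fun k _ => Finset.sum_congr rfl fun t _ =>
                  Finset.sum_congr rfl fun y _ => heq k t y
            _ = (∑ k, ∑ t, ∑ y, St16.PY p y k t)
                - ∑ k, ∑ t, ∑ y, St16.PY p y k t * ∑ m, φ (y, k) (some m) := by
                simp only [Finset.sum_sub_distrib]
            _ ≤ 1 - (1 - δ) := by rw [hPY1]; linarith
            _ = δ := by ring
  -- bound 3a
  have hB3a : ∑ m, ∑ k, ∑ t, ∑ y,
      (if εr < St16.Qm p m k t / St16.S p k t then St16.Qm p m k t else 0)
        * ((St16.PY p y k t / St16.S p k t) * φ (y, k) (some m)) ≤ ε := by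
    calc ∑ m, ∑ k, ∑ t, ∑ y,
        (if εr < St16.Qm p m k t / St16.S p k t then St16.Qm p m k t else 0)
          * ((St16.PY p y k t / St16.S p k t) * φ (y, k) (some m))
        ≤ ∑ m, ∑ k, ∑ t,
          (if εr < St16.Qm p m k t / St16.S p k t then St16.Qm p m k t else 0) := by
          refine Finset.sum_le_sum fun m _ => Finset.sum_le_sum fun k _ =>
            Finset.sum_le_sum fun t _ => ?_
          rw [← Finset.mul_sum]
          have hc0 : 0 ≤ (if εr < St16.Qm p m k t / St16.S p k t then St16.Qm p m k t else 0) := by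
            split_ifs
            · exact St16.Qm_nonneg p hp0 m k t
            · exact le_rfl
          refine mul_le_of_le_one_right hc0 ?_
          refine le_trans (Finset.sum_le_sum fun y _ => ?_) (St16.sum_frac_le_one p k t)
          exact mul_le_of_le_one_right (St16.frac_nonneg p hp0 y k t)
            (St16.φ_some_le_one φ hφ m y k)
      _ ≤ ε := hM
  -- bound 3b
  have hB3b : ∑ m, ∑ k, ∑ t, ∑ y,
      εr * (St16.PY p y k t * φ (y, k) (some m)) ≤ ε := by
    have h1 : ∑ m, ∑ k, ∑ t, ∑ y, St16.PY p y k t * φ (y, k) (some m) ≤ 1 := by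
      calc ∑ m, ∑ k, ∑ t, ∑ y, St16.PY p y k t * φ (y, k) (some m)
          = ∑ k, ∑ t, ∑ y, ∑ m, St16.PY p y k t * φ (y, k) (some m) := St16.rot4 _
        _ ≤ ∑ k, ∑ t, ∑ y, St16.PY p y k t := by
            refine Finset.sum_le_sum fun k _ => Finset.sum_le_sum fun t _ =>
              Finset.sum_le_sum fun y _ => ?_
            rw [← Finset.mul_sum]
            exact mul_le_of_le_one_right (St16.PY_nonneg p hp0 y k t)
              (St16.sum_φ_some_le_one φ hφ y k)
        _ = 1 := St16.PY_sum_one p hp1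
    calc ∑ m, ∑ k, ∑ t, ∑ y, εr * (St16.PY p y k t * φ (y, k) (some m))
        = εr * ∑ m, ∑ k, ∑ t, ∑ y, St16.PY p y k t * φ (y, k) (some m) := by
          simp only [← Finset.mul_sum]
      _ ≤ εr := mul_le_of_le_one_right hεrpos.le h1
      _ ≤ ε := hεrle
  -- expectation bound
  have hExp : ∑ m, ∑ k, ∑ t, St16.Qm p m k t * (1 - St16.tau p φ D m k t) ≤ ν := by
    calc ∑ m, ∑ k, ∑ t, St16.Qm p m k t * (1 - St16.tau p φ D m k t)
        = ∑ m, ∑ k, ∑ t, ∑ y, (if (y, k, t) ∈ D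
            then St16.Qm p m k t * (St16.PY p y k t / St16.S p k t) *
              (φ (y, k) none + φ (y, k) (some m))
            else St16.Qm p m k t * (St16.PY p y k t / St16.S p k t)) :=
          Finset.sum_congr rfl fun m _ => Finset.sum_congr rfl fun k _ =>
            Finset.sum_congr rfl fun t _ => St16.hC1 p φ D hp0 hφ m k t
      _ ≤ ∑ m, ∑ k, ∑ t, ∑ y,
          ((if (y, k, t) ∈ D then 0 else St16.Qm p m k t * (St16.PY p y k t / St16.S p k t))
            + St16.Qm p m k t * ((St16.PY p y k t / St16.S p k t) * φ (y, k) none)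
            + (if εr < St16.Qm p m k t / St16.S p k t then St16.Qm p m k t else 0)
                * ((St16.PY p y k t / St16.S p k t) * φ (y, k) (some m))
            + εr * (St16.PY p y k t * φ (y, k) (some m))) :=
          Finset.sum_le_sum fun m _ => Finset.sum_le_sum fun k _ =>
            Finset.sum_le_sum fun t _ => Finset.sum_le_sum fun y _ => hPW m k t y
      _ = (∑ m, ∑ k, ∑ t, ∑ y,
            (if (y, k, t) ∈ D then 0 else St16.Qm p m k t * (St16.PY p y k t / St16.S p k t)))
          + (∑ m, ∑ k, ∑ t, ∑ y,
            St16.Qm p m k t * ((St16.PY p y k t / St16.S p k t) * φ (y, k) none))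
          + (∑ m, ∑ k, ∑ t, ∑ y,
            (if εr < St16.Qm p m k t / St16.S p k t then St16.Qm p m k t else 0)
              * ((St16.PY p y k t / St16.S p k t) * φ (y, k) (some m)))
          + (∑ m, ∑ k, ∑ t, ∑ y, εr * (St16.PY p y k t * φ (y, k) (some m))) := by
          simp only [Finset.sum_add_distrib]
      _ ≤ ε + δ + ε + ε := add_le_add (add_le_add (add_le_add hB1 hB2) hB3a) hB3b
      _ = ν := by rw [hν]; ring
  -- Markov
  have hG : Real.sqrt ν * (∑ m, ∑ k, ∑ t,
      (if St16.tau p φ D m k t < 1 - Real.sqrt ν then St16.Qm p m k t else 0))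
      ≤ ∑ m, ∑ k, ∑ t, St16.Qm p m k t * (1 - St16.tau p φ D m k t) := by
    simp only [Finset.mul_sum]
    refine Finset.sum_le_sum fun m _ => Finset.sum_le_sum fun k _ =>
      Finset.sum_le_sum fun t _ => ?_
    by_cases h : St16.tau p φ D m k t < 1 - Real.sqrt ν
    · rw [if_pos h]
      have h2 : Real.sqrt ν ≤ 1 - St16.tau p φ D m k t := by linarith
      calc Real.sqrt ν * St16.Qm p m k t
          ≤ (1 - St16.tau p φ D m k t) * St16.Qm p m k t :=
            mul_le_mul_of_nonneg_right h2 (St16.Qm_nonneg p hp0 m k t)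
        _ = St16.Qm p m k t * (1 - St16.tau p φ D m k t) := mul_comm _ _
    · rw [if_neg h, mul_zero]
      exact mul_nonneg (St16.Qm_nonneg p hp0 m k t)
        (by linarith [St16.tau_le_one p φ D hp0 hφ m k t])
  have hfin : Real.sqrt ν * (∑ m, ∑ k, ∑ t,
      (if St16.tau p φ D m k t < 1 - Real.sqrt ν then St16.Qm p m k t else 0))
      ≤ Real.sqrt ν * Real.sqrt ν := by
    rw [Real.mul_self_sqrt hνpos.le]
    exact hG.trans hExp
  exact le_of_mul_le_mul_left hfin hsν

end
end

section
/- Let r, α, κ, a, b be real numbers with r ≥ 0, α ≥ 0, κ ≥ 0, and b ≥ 0. Then the following are equivalent: (1) r + α ≤ a, 2α − κ ≤ b, and α ≤ κ; (2) there exist real numbers r', α', κ', β with β ≥ 0, r' ≥ 0, α' ≥ 0, κ' ≥ 0, β ≤ r', r = r' − β, α = α' + β, κ = κ' + 2β, r' + α' ≤ a, α' ≤ b, and α' ≤ κ'. -/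
/-!
Substituting `r' = r + β`, `α' = α - β`, `κ' = κ - 2β` leaves a system in `β` alone, with lower
bounds `0` and `α - b` and upper bounds `α` and `κ - α` (which together give `2β ≤ κ`). It is
solvable exactly when every lower bound lies below every upper bound, and `β = max 0 (α - b)`
is then a solution.
-/

theorem statement17_general (r α κ a b : ℝ)
    (hr : 0 ≤ r) (hα : 0 ≤ α) (hb : 0 ≤ b) :
    (r + α ≤ a ∧ 2 * α - κ ≤ b ∧ α ≤ κ) ↔
    (∃ r' α' κ' β : ℝ, 0 ≤ β ∧ 0 ≤ r' ∧ 0 ≤ α' ∧ 0 ≤ κ' ∧ β ≤ r' ∧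
      r = r' - β ∧ α = α' + β ∧ κ = κ' + 2 * β ∧
      r' + α' ≤ a ∧ α' ≤ b ∧ α' ≤ κ') := by
  constructor
  · rintro ⟨hsum, hexcess, hακ⟩
    set β := max 0 (α - b)
    have hβ_nonneg : 0 ≤ β := le_max_left _ _
    have hβ_ge : α - b ≤ β := le_max_right _ _
    have hβ_le_α : β ≤ α := max_le hα (by linarith)
    have hβ_le_gap : β ≤ κ - α := max_le (by linarith) (by linarith)
    exact ⟨r + β, α - β, κ - 2 * β, β, hβ_nonneg, by linarith, by linarith, by linarith,
      by linarith, by ring, by ring, by ring, by linarith, by linarith, by linarith⟩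
  · rintro ⟨r', α', κ', β, hβ, -, -, -, -, rfl, rfl, rfl, hsum, hα'b, hα'κ'⟩
    exact ⟨by linarith, by linarith, by linarith⟩

/-- Fourier–Motzkin elimination step in the direct part of the
capacity-region characterization: for `r, α, κ ≥ 0` and `b ≥ 0`, the system
`r + α ≤ a`, `2α − κ ≤ b`, `α ≤ κ` is equivalent to the existence of
`r', α', κ', β` with `β ≥ 0`, `r' ≥ 0`, `α' ≥ 0`, `κ' ≥ 0`, `β ≤ r'`,
`r = r' − β`, `α = α' + β`, `κ = κ' + 2β`, `r' + α' ≤ a`, `α' ≤ b`, `α' ≤ κ'`. -/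
theorem statement17 (r α κ a b : ℝ)
    (hr : 0 ≤ r) (hα : 0 ≤ α) (hκ : 0 ≤ κ) (hb : 0 ≤ b) :
    (r + α ≤ a ∧ 2 * α - κ ≤ b ∧ α ≤ κ) ↔
    (∃ r' α' κ' β : ℝ, 0 ≤ β ∧ 0 ≤ r' ∧ 0 ≤ α' ∧ 0 ≤ κ' ∧ β ≤ r' ∧
      r = r' - β ∧ α = α' + β ∧ κ = κ' + 2 * β ∧
      r' + α' ≤ a ∧ α' ≤ b ∧ α' ≤ κ') :=
  statement17_general r α κ a b hr hα hb
end

section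
/- Let n be a positive integer and r ≥ β ≥ 0 real numbers such that N = 2^{nr}, M = 2^{n(r−β)}, and L = 2^{2nβ} are positive integers with M ≤ N. Let ℳ̃ and ℳ be finite sets with |ℳ̃| = M and |ℳ| = N, and let G₁, …, G_L be independent random variables, each uniformly distributed over the set of injective maps from ℳ̃ to ℳ. Let γ = (4r + 2)·ln 2 / (2 ln 2 − 1). Then Pr( there exist distinct m, m' ∈ ℳ with |{ j ∈ {1,…,L} : {m, m'} ⊆ range(G_j) }| > γn ) ≤ e^{−1}·2^{−2(n(r+1)−1)}. -/
/-!
For a fixed pair `m ≠ m'`, double counting over all pairs (which are alike up to a permutation of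
`ℳ`) shows that a uniform injection covers both points with probability
`M (M - 1) / (N (N - 1)) ≤ M² / N² = 1 / L`. So the number `X` of indices `j` whose range covers
the pair has `𝔼[2 ^ X] = (1 + p) ^ L ≤ e`, and Markov's inequality gives
`Pr(X > γ n) ≤ e · 2 ^ (-γ n)`. A union bound over the fewer than `N²` pairs finishes the proof;
`γ` is chosen so that `N² · e · 2 ^ (-γ n) ≤ e⁻¹ · 2 ^ (-2 (n (r + 1) - 1))`.
-/

open scoped Classical

open Finset Fintype Real

theorem exists_perm_apply_eq_and_apply_eq {α : Type*} {m m' μ μ' : α} (hm : m ≠ m')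
    (hμ : μ ≠ μ') : ∃ σ : Equiv.Perm α, σ m = μ ∧ σ m' = μ' := by
  have hm' : Equiv.swap m μ m' ≠ μ := fun h =>
    hm ((Equiv.swap m μ).injective (h.trans (Equiv.swap_apply_left m μ).symm)).symm
  refine ⟨(Equiv.swap m μ).trans (Equiv.swap (Equiv.swap m μ m') μ'), ?_, ?_⟩
  · simp [Equiv.swap_apply_of_ne_of_ne hm'.symm hμ]
  · simp

section Embedding

variable {α β : Type*} [Fintype α] [Fintype β]

theorem card_embedding_pair_mem_range_eq {m m' μ μ' : β} (hm : m ≠ m') (hμ : μ ≠ μ') :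
    #{g : α ↪ β | m ∈ Set.range g ∧ m' ∈ Set.range g} =
      #{g : α ↪ β | μ ∈ Set.range g ∧ μ' ∈ Set.range g} := by
  obtain ⟨σ, rfl, rfl⟩ := exists_perm_apply_eq_and_apply_eq hm hμ
  refine card_equiv (Equiv.embeddingCongr (Equiv.refl α) σ) fun g => ?_
  simp [Equiv.embeddingCongr_apply]

theorem card_embedding_pair_mem_range_mul {m m' : β} (hm : m ≠ m') :
    #{g : α ↪ β | m ∈ Set.range g ∧ m' ∈ Set.range g} * (card β * card β - card β) =
      card (α ↪ β) * (card α * card α - card α) := by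
  have := card_mul_eq_card_mul (s := univ) (t := (univ : Finset β).offDiag)
    (fun (g : α ↪ β) p => p.1 ∈ Set.range g ∧ p.2 ∈ Set.range g)
    (m := card α * card α - card α)
    (n := #{g : α ↪ β | m ∈ Set.range g ∧ m' ∈ Set.range g}) ?_ ?_
  · rw [card_univ, offDiag_card, card_univ] at this
    rw [this, mul_comm]
  · intro g _
    have : (univ : Finset β).offDiag.bipartiteAbove
        (fun (g : α ↪ β) p => p.1 ∈ Set.range g ∧ p.2 ∈ Set.range g) g =
          (univ.map g).offDiag := by
      ext p
      simp [bipartiteAbove, eq_comm, and_comm, and_left_comm]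
    rw [this, offDiag_card, card_map, card_univ]
  · intro p hp
    exact card_embedding_pair_mem_range_eq (mem_offDiag.1 hp).2.2 hm

theorem card_embedding_pair_mem_range_mul_sq_le {m m' : β} (hm : m ≠ m')
    (hαβ : card α ≤ card β) :
    #{g : α ↪ β | m ∈ Set.range g ∧ m' ∈ Set.range g} * card β ^ 2 ≤
      card (α ↪ β) * card α ^ 2 := by
  have hβ : 2 ≤ card β := one_lt_card_iff_nontrivial.2 ⟨m, m', hm⟩
  have hcount := card_embedding_pair_mem_range_mul (α := α) hm
  set B := #{g : α ↪ β | m ∈ Set.range g ∧ m' ∈ Set.range g}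
  set M := card α
  set N := card β
  zify [Nat.le_mul_self M, Nat.le_mul_self N] at hcount hαβ hβ ⊢
  -- `B N (N - 1) = I M (M - 1) ≤ I M (N - 1)` gives `B N ≤ I M`, and then `B N² ≤ I M²`.
  have hBN : (B : ℤ) * N ≤ card (α ↪ β) * M := by
    nlinarith [mul_nonneg (mul_nonneg (Int.natCast_nonneg (card (α ↪ β))) (Int.natCast_nonneg M))
      (sub_nonneg.2 hαβ)]
  nlinarith

theorem card_embedding_pair_mem_range_mul_le {m m' : β} (hm : m ≠ m') (hαβ : card α ≤ card β)
    {L : ℕ} (hL : L * card α ^ 2 = card β ^ 2) :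
    #{g : α ↪ β | m ∈ Set.range g ∧ m' ∈ Set.range g} * L ≤ card (α ↪ β) := by
  have hα : 0 < card α := by
    by_contra! h
    have : card β = 0 := by simpa [Nat.le_zero.1 h] using hL.symm
    exact (card_eq_zero_iff.1 this).false m
  have := card_embedding_pair_mem_range_mul_sq_le hm hαβ
  rw [← hL, ← mul_assoc] at this
  exact le_of_mul_le_mul_right this (pow_pos hα 2)

end Embedding

theorem sum_two_pow_card_filter {Ω : Type*} [Fintype Ω] (P : Ω → Prop) [DecidablePred P]
    (L : ℕ) :
    ∑ G : Fin L → Ω, (2 : ℝ) ^ #{j | P (G j)} = (card Ω + #{ω | P ω}) ^ L := by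
  have hsum : ∑ ω, (if P ω then (2 : ℝ) else 1) = card Ω + #{ω | P ω} := by
    have h : ∀ ω, (if P ω then (2 : ℝ) else 1) = 1 + if P ω then 1 else 0 := by
      intro ω; split_ifs <;> norm_num
    simp only [h, sum_add_distrib, sum_const, sum_boole, card_univ, nsmul_eq_mul, mul_one]
  rw [← hsum, Fintype.sum_pow]
  refine sum_congr rfl fun G _ => ?_
  rw [prod_ite, prod_const, prod_const, one_pow, mul_one]

theorem card_filter_lt_mul_two_rpow_le_sum {ι : Type*} (s : Finset ι) (f : ι → ℕ) (c : ℝ) :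
    #{i ∈ s | c < f i} * (2 : ℝ) ^ c ≤ ∑ i ∈ s, (2 : ℝ) ^ f i := by
  calc #{i ∈ s | c < f i} * (2 : ℝ) ^ c ≤ ∑ i ∈ s with c < f i, (2 : ℝ) ^ f i := by
        rw [← nsmul_eq_mul]
        refine card_nsmul_le_sum _ _ _ fun i hi => ?_
        rw [← rpow_natCast]
        exact rpow_le_rpow_of_exponent_le one_le_two (mem_filter.1 hi).2.le
    _ ≤ ∑ i ∈ s, (2 : ℝ) ^ f i :=
        sum_le_sum_of_subset_of_nonneg (filter_subset _ _) fun _ _ _ => by positivity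

theorem add_pow_le_exp_one_mul_pow {x y : ℝ} {L : ℕ} (hy : 0 ≤ y) (hxy : y * L ≤ x) :
    (x + y) ^ L ≤ exp 1 * x ^ L := by
  rcases L.eq_zero_or_pos with rfl | hL
  · simp [one_le_exp zero_le_one]
  have hL' : (0 : ℝ) < L := Nat.cast_pos.2 hL
  have hx : 0 ≤ x := (mul_nonneg hy hL'.le).trans hxy
  calc (x + y) ^ L ≤ (x + x / L) ^ L := by
        gcongr
        rwa [le_div_iff₀ hL']
    _ = (1 + (L : ℝ)⁻¹) ^ L * x ^ L := by rw [← mul_pow]; ring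
    _ ≤ exp 1 * x ^ L := by gcongr; exact one_add_inv_pow_le_exp

theorem card_filter_lt_card_filter_le {Ω : Type*} [Fintype Ω] (P : Ω → Prop) [DecidablePred P]
    {L : ℕ} (hP : #{ω | P ω} * L ≤ card Ω) (c : ℝ) :
    (#{G : Fin L → Ω | c < #{j | P (G j)}} : ℝ) ≤ exp 1 * card Ω ^ L * 2 ^ (-c) := by
  have hmarkov := card_filter_lt_mul_two_rpow_le_sum univ (fun G : Fin L → Ω => #{j | P (G j)}) c
  rw [sum_two_pow_card_filter] at hmarkov
  have hchernoff : ((card Ω : ℝ) + #{ω | P ω}) ^ L ≤ exp 1 * card Ω ^ L :=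
    add_pow_le_exp_one_mul_pow (Nat.cast_nonneg _) (by exact_mod_cast hP)
  rw [rpow_neg zero_le_two, ← div_eq_mul_inv, le_div_iff₀ (rpow_pos_of_pos two_pos c)]
  exact hmarkov.trans hchernoff

theorem card_filter_exists_lt_card_filter_le {Ω ι : Type*} [Fintype Ω] (s : Finset ι)
    (P : ι → Ω → Prop) [∀ i, DecidablePred (P i)] {L : ℕ}
    (hP : ∀ i ∈ s, #{ω | P i ω} * L ≤ card Ω) (c : ℝ) :
    (#{G : Fin L → Ω | ∃ i ∈ s, c < #{j | P i (G j)}} : ℝ) ≤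
      #s * (exp 1 * card Ω ^ L * 2 ^ (-c)) := by
  have hunion : ({G : Fin L → Ω | ∃ i ∈ s, c < #{j | P i (G j)}} : Finset _) =
      s.biUnion fun i => {G : Fin L → Ω | c < #{j | P i (G j)}} := by
    ext G; simp
  calc (#{G : Fin L → Ω | ∃ i ∈ s, c < #{j | P i (G j)}} : ℝ)
      ≤ ∑ i ∈ s, (#{G : Fin L → Ω | c < #{j | P i (G j)}} : ℝ) := by
        rw [hunion]; exact_mod_cast card_biUnion_le
    _ ≤ ∑ _i ∈ s, exp 1 * card Ω ^ L * 2 ^ (-c) :=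
        sum_le_sum fun i hi => card_filter_lt_card_filter_le (P i) (hP i hi) c
    _ = #s * (exp 1 * card Ω ^ L * 2 ^ (-c)) := by rw [sum_const, nsmul_eq_mul]

theorem sq_two_rpow_mul_exp_mul_two_rpow_neg_le {n : ℕ} (hn : 0 < n) {r : ℝ} (hr : 0 ≤ r) :
    ((2 : ℝ) ^ (n * r)) ^ 2 *
        (exp 1 * 2 ^ (-((4 * r + 2) * log 2 / (2 * log 2 - 1) * n))) ≤
      (exp 1)⁻¹ * 2 ^ (-2 * (n * (r + 1) - 1)) := by
  rw [← rpow_natCast, ← rpow_mul zero_le_two, rpow_def_of_pos two_pos, rpow_def_of_pos two_pos,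
    rpow_def_of_pos two_pos, ← exp_add, ← exp_add, ← exp_neg, ← exp_add, exp_le_exp]
  have hg₁ : 1 / 2 < log 2 := by linarith [log_two_gt_d9]
  have hg₂ : log 2 < 1 := by linarith [log_two_lt_d9]
  set g := log 2
  set u : ℝ := (4 * r + 2) * n with hu_def
  have hu : 2 ≤ u := by
    have : (1 : ℝ) ≤ n := by exact_mod_cast hn
    nlinarith
  have hexp : 2 + g * (u - 2) ≤ g * (u * g / (2 * g - 1)) := by
    rw [mul_div_assoc', le_div_iff₀ (by linarith)]
    -- the difference of the two sides is `(1 - g) (u g - 2 (2 g - 1))`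
    nlinarith [mul_nonneg (sub_nonneg.2 hg₂.le) (by nlinarith : 0 ≤ u * g - 2 * (2 * g - 1))]
  have : (4 * r + 2) * g / (2 * g - 1) * n = u * g / (2 * g - 1) := by ring
  rw [this]
  push_cast
  linear_combination hexp + g * hu_def

/-- Appendix `app:sims:g*`: for independent uniformly random
injections `G₁, …, G_L : ℳ̃ ↪ ℳ` with `|ℳ̃| = M = 2^{n(r−β)}`, `|ℳ| = N = 2^{nr}`,
`L = 2^{2nβ}`, and `γ = (4r+2)·ln 2/(2 ln 2 − 1)`, the probability (under the
uniform distribution on tuples of injections) that some pair of distinct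
`m, m' ∈ ℳ` lies in more than `γn` of the ranges is at most
`e^{−1}·2^{−2(n(r+1)−1)}`. -/
theorem statement18 (n : ℕ) (hn : 0 < n) (r β : ℝ) (hβ : 0 ≤ β) (hrβ : β ≤ r)
    (N M L : ℕ)
    (hN : (N : ℝ) = (2 : ℝ) ^ ((n : ℝ) * r))
    (hM : (M : ℝ) = (2 : ℝ) ^ ((n : ℝ) * (r - β)))
    (hL : (L : ℝ) = (2 : ℝ) ^ (2 * (n : ℝ) * β))
    (hMN : M ≤ N)
    {Mt Mc : Type} [Fintype Mt] [Fintype Mc]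
    (hcardMt : Fintype.card Mt = M) (hcardMc : Fintype.card Mc = N) :
    (Nat.card {G : Fin L → (Mt ↪ Mc) //
        ∃ m m' : Mc, m ≠ m' ∧
          ((4 * r + 2) * Real.log 2 / (2 * Real.log 2 - 1)) * n <
            (Nat.card {j : Fin L // m ∈ Set.range (G j) ∧ m' ∈ Set.range (G j)} : ℝ)} : ℝ)
      / (Nat.card (Fin L → (Mt ↪ Mc)))
      ≤ (Real.exp 1)⁻¹ * (2 : ℝ) ^ (-2 * ((n : ℝ) * (r + 1) - 1)) := by
  set c := (4 * r + 2) * log 2 / (2 * log 2 - 1) * n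
  have hLMN : L * M ^ 2 = N ^ 2 := by
    have : (L : ℝ) * M ^ 2 = N ^ 2 := by
      rw [hL, hM, hN, ← rpow_natCast, ← rpow_natCast, ← rpow_mul zero_le_two,
        ← rpow_mul zero_le_two, ← rpow_add two_pos]
      ring_nf
    exact_mod_cast this
  subst hcardMt hcardMc
  have hbad := card_filter_exists_lt_card_filter_le (univ : Finset Mc).offDiag
    (fun p (g : Mt ↪ Mc) => p.1 ∈ Set.range g ∧ p.2 ∈ Set.range g)
    (fun p hp => card_embedding_pair_mem_range_mul_le (mem_offDiag.1 hp).2.2 hMN hLMN) c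
  have hoffDiag : (#(univ : Finset Mc).offDiag : ℝ) ≤ (2 ^ (n * r)) ^ 2 := by
    rw [← hN, offDiag_card, card_univ]
    exact_mod_cast (Nat.sub_le _ _).trans (sq _).ge
  simp only [mem_offDiag, mem_univ, true_and, Prod.exists] at hbad
  simp only [Nat.card_eq_fintype_card, Fintype.card_subtype, Fintype.card_fun, Fintype.card_fin,
    Nat.cast_pow]
  refine div_le_of_le_mul₀ (by positivity) (by positivity) ?_
  calc _ ≤ _ := hbad
    _ ≤ (2 ^ (n * r)) ^ 2 * (exp 1 * card (Mt ↪ Mc) ^ L * 2 ^ (-c)) := by gcongr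
    _ = (2 ^ (n * r)) ^ 2 * (exp 1 * 2 ^ (-c)) * card (Mt ↪ Mc) ^ L := by ring
    _ ≤ _ := mul_le_mul_of_nonneg_right
        (sq_two_rpow_mul_exp_mul_two_rpow_neg_le hn (hβ.trans hrβ)) (by positivity)
end

section
/- Let n be a positive integer and r ≥ β ≥ 0 real numbers such that N = 2^{nr}, M = 2^{n(r−β)}, and L = 2^{2nβ} are positive integers with M ≤ N. Let ℳ̃ and ℳ be finite sets with |ℳ̃| = M and |ℳ| = N, and let G₁, …, G_L be independent random variables, each uniformly distributed over the set of injective maps from ℳ̃ to ℳ. Then Pr( there exists m ∈ ℳ with |{ j ∈ {1,…,L} : m ∈ range(G_j) }| > 2^{1+nβ} ) ≤ 2^{nr}·e^{−(2 ln 2 − 1)·2^{nβ}}. -/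
open scoped BigOperators Classical

noncomputable section

/-!
Union bound over `m ∈ ℳ`. For fixed `m`, the events `m ∈ range G_j` are independent, each of
probability `M / N`, so for their number `X` the exponential Markov inequality with base `2` gives
`Pr(X > 2b) ≤ E[2^X] / 2^{2b} = (1 + M/N)^L / 4^b ≤ e^{LM/N} / 4^b = e^b / 4^b`,
since `LM/N = 2^{nβ} = b`.
-/

open Finset Real

section Embedding

variable {α β : Type*} [Fintype α] [Fintype β]

lemma card_filter_mem_range_embedding_eq (m m' : β) :
    #{g : α ↪ β | m ∈ Set.range g} = #{g : α ↪ β | m' ∈ Set.range g} := by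
  refine card_equiv (Equiv.embeddingCongr (Equiv.refl α) (Equiv.swap m m')) fun g => ?_
  simp [Equiv.embeddingCongr_apply, Equiv.swap_apply_eq_iff]

lemma sum_card_filter_mem_range_embedding :
    ∑ m : β, #{g : α ↪ β | m ∈ Set.range g} = Fintype.card (α ↪ β) * Fintype.card α := by
  have hrange (g : α ↪ β) : #{m : β | m ∈ Set.range g} = Fintype.card α := by
    rw [← Set.card_range_of_injective g.injective, ← Set.toFinset_card]
    congr 1; ext; simp
  simp_rw [card_filter, Finset.sum_comm (s := univ (α := β)), ← card_filter, hrange,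
    sum_const, card_univ, smul_eq_mul]

lemma card_filter_mem_range_embedding_mul_card (m : β) :
    #{g : α ↪ β | m ∈ Set.range g} * Fintype.card β = Fintype.card (α ↪ β) * Fintype.card α := by
  rw [← sum_card_filter_mem_range_embedding, sum_congr rfl fun m' _ =>
    card_filter_mem_range_embedding_eq m' m, sum_const, card_univ, smul_eq_mul, mul_comm]

end Embedding

section Chernoff

variable {ι Ω : Type*} [Fintype ι] [Fintype Ω]

/-- Markov's inequality for `a ^ #{j | p (G j)}`, whose sum over all `G` factorizes over `ι`. -/
lemma card_filter_lt_card_filter_mul_rpow_le (p : Ω → Prop) [DecidablePred p] {a : ℝ}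
    (ha : 1 ≤ a) (t : ℝ) :
    (#{G : ι → Ω | t < #{j | p (G j)}} : ℝ) * a ^ t
      ≤ (Fintype.card Ω + (a - 1) * #{ω | p ω}) ^ Fintype.card ι := by
  set f : Ω → ℝ := fun ω => if p ω then a else 1
  have hf_nonneg (ω : Ω) : 0 ≤ f ω := by unfold f; split_ifs <;> linarith
  have hsum : ∑ ω, f ω = Fintype.card Ω + (a - 1) * #{ω | p ω} := by
    have hf (ω : Ω) : f ω = 1 + (a - 1) * if p ω then 1 else 0 := by
      unfold f; split_ifs <;> ring
    simp only [hf, sum_add_distrib, ← mul_sum, sum_boole, sum_const, card_univ, nsmul_one]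
  have hprod (G : ι → Ω) : ∏ j, f (G j) = a ^ #{j | p (G j)} := by
    simp only [f, prod_ite, prod_const, one_pow, mul_one]
  calc (#{G : ι → Ω | t < #{j | p (G j)}} : ℝ) * a ^ t
      ≤ ∑ G ∈ {G : ι → Ω | t < #{j | p (G j)}}, ∏ j, f (G j) := by
        rw [← nsmul_eq_mul]
        refine card_nsmul_le_sum _ _ _ fun G hG => ?_
        rw [hprod, ← rpow_natCast]
        exact rpow_le_rpow_of_exponent_le ha (mem_filter.mp hG).2.le
    _ ≤ ∑ G : ι → Ω, ∏ j, f (G j) :=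
        sum_le_sum_of_subset_of_nonneg (subset_univ _) fun G _ _ =>
          prod_nonneg fun j _ => hf_nonneg _
    _ = (∑ ω, f ω) ^ Fintype.card ι := by
        rw [← Fintype.prod_sum, prod_const, card_univ]
    _ = _ := by rw [hsum]

end Chernoff

section RandomInjections

variable {ι α β : Type*} [Fintype ι] [Fintype α] [Fintype β] {a : ℝ}

lemma card_lt_card_mem_range_mul_rpow_le (m : β) (ha : 1 ≤ a) (t : ℝ) :
    (#{G : ι → (α ↪ β) | t < #{j | m ∈ Set.range (G j)}} : ℝ) * a ^ t
      ≤ (Fintype.card (α ↪ β) : ℝ) ^ Fintype.card ι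
          * exp ((a - 1) * Fintype.card ι * Fintype.card α / Fintype.card β) := by
  have : Nonempty β := ⟨m⟩
  have hβ : (Fintype.card β : ℝ) ≠ 0 := Nat.cast_ne_zero.2 Fintype.card_ne_zero
  have hcount : (#{g : α ↪ β | m ∈ Set.range g} : ℝ)
      = Fintype.card (α ↪ β) * (Fintype.card α / Fintype.card β) := by
    rw [mul_div_assoc', eq_div_iff hβ]
    exact_mod_cast card_filter_mem_range_embedding_mul_card (α := α) m
  set T : ℝ := (Fintype.card (α ↪ β) : ℝ)
  set x : ℝ := (Fintype.card α : ℝ) / Fintype.card β with hx_def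
  calc (#{G : ι → (α ↪ β) | t < #{j | m ∈ Set.range (G j)}} : ℝ) * a ^ t
      ≤ (T + (a - 1) * #{g : α ↪ β | m ∈ Set.range g}) ^ Fintype.card ι :=
        card_filter_lt_card_filter_mul_rpow_le (fun g : α ↪ β => m ∈ Set.range g) ha t
    _ = T ^ Fintype.card ι * ((a - 1) * x + 1) ^ Fintype.card ι := by
        rw [hcount, ← mul_pow]; ring
    _ ≤ T ^ Fintype.card ι * exp ((a - 1) * x) ^ Fintype.card ι := by
        gcongr; exact add_one_le_exp _
    _ = _ := by
        rw [← exp_nat_mul]; congr 2; rw [hx_def]; ring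

lemma card_exists_lt_card_mem_range_div_card_le (ha : 1 ≤ a) (t : ℝ) :
    (Nat.card {G : ι → (α ↪ β) // ∃ m : β, t < Nat.card {j : ι // m ∈ Set.range (G j)}} : ℝ)
        / Nat.card (ι → (α ↪ β))
      ≤ Fintype.card β * exp ((a - 1) * Fintype.card ι * Fintype.card α / Fintype.card β)
          / a ^ t := by
  have hunion :
      (Nat.card {G : ι → (α ↪ β) // ∃ m : β, t < Nat.card {j : ι // m ∈ Set.range (G j)}} : ℝ)
      ≤ ∑ m : β, (#{G : ι → (α ↪ β) | t < #{j | m ∈ Set.range (G j)}} : ℝ) := by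
    simp only [Nat.card_eq_fintype_card, Fintype.card_subtype]
    have : ({G : ι → (α ↪ β) | ∃ m : β, t < #{j | m ∈ Set.range (G j)}} : Finset _)
        = univ.biUnion fun m => {G | t < #{j | m ∈ Set.range (G j)}} := by
      ext; simp
    exact_mod_cast this ▸ card_biUnion_le
  have hat : 0 < a ^ t := rpow_pos_of_pos (by linarith) t
  refine div_le_of_le_mul₀ (by positivity) (by positivity) ?_
  calc _ ≤ ∑ m : β, (#{G : ι → (α ↪ β) | t < #{j | m ∈ Set.range (G j)}} : ℝ) := hunion
    _ ≤ ∑ _m : β, (Fintype.card (α ↪ β) : ℝ) ^ Fintype.card ι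
          * exp ((a - 1) * Fintype.card ι * Fintype.card α / Fintype.card β) / a ^ t :=
        sum_le_sum fun m _ => (le_div_iff₀ hat).2 (card_lt_card_mem_range_mul_rpow_le m ha t)
    _ = _ := by
        simp only [sum_const, card_univ, nsmul_eq_mul, Nat.card_eq_fintype_card, Fintype.card_fun]
        push_cast; ring

end RandomInjections

theorem statement19_general (n : ℕ) (r β : ℝ)
    (N M L : ℕ)
    (hN : (N : ℝ) = (2 : ℝ) ^ ((n : ℝ) * r))
    (hM : (M : ℝ) = (2 : ℝ) ^ ((n : ℝ) * (r - β)))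
    (hL : (L : ℝ) = (2 : ℝ) ^ (2 * (n : ℝ) * β))
    {Mt Mc : Type} [Fintype Mt] [Fintype Mc]
    (hcardMt : Fintype.card Mt = M) (hcardMc : Fintype.card Mc = N) :
    (Nat.card {G : Fin L → (Mt ↪ Mc) //
        ∃ m : Mc, (2 : ℝ) ^ (1 + (n : ℝ) * β) <
          (Nat.card {j : Fin L // m ∈ Set.range (G j)} : ℝ)} : ℝ)
      / (Nat.card (Fin L → (Mt ↪ Mc)))
      ≤ (2 : ℝ) ^ ((n : ℝ) * r) *
          Real.exp (-(2 * Real.log 2 - 1) * (2 : ℝ) ^ ((n : ℝ) * β)) := by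
  have hmean : (2 - 1) * (L : ℝ) * M / N = 2 ^ ((n : ℝ) * β) := by
    rw [hL, hM, hN, show (2 : ℝ) - 1 = 1 by norm_num, one_mul, ← rpow_add two_pos,
      ← rpow_sub two_pos]
    ring_nf
  have hthreshold :
      (2 : ℝ) ^ (2 : ℝ) ^ (1 + (n : ℝ) * β) = exp (2 * log 2 * 2 ^ ((n : ℝ) * β)) := by
    rw [rpow_def_of_pos two_pos, rpow_add two_pos, rpow_one]
    ring_nf
  have hbound := card_exists_lt_card_mem_range_div_card_le (ι := Fin L) (α := Mt) (β := Mc)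
    one_le_two ((2 : ℝ) ^ (1 + (n : ℝ) * β))
  rw [Fintype.card_fin, hcardMt, hcardMc, hmean, hthreshold, hN, mul_div_assoc,
    ← exp_sub] at hbound
  convert hbound using 3
  ring

/-- Appendix `app:sims:gdagger`: for independent uniformly random
injections `G₁, …, G_L : ℳ̃ ↪ ℳ` with `|ℳ̃| = M = 2^{n(r−β)}`, `|ℳ| = N = 2^{nr}`,
and `L = 2^{2nβ}`, the probability (under the uniform distribution on tuples of
injections) that some `m ∈ ℳ` lies in more than `2^{1+nβ}` of the ranges is at
most `2^{nr}·e^{−(2 ln 2 − 1)·2^{nβ}}`. -/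
theorem statement19 (n : ℕ) (hn : 0 < n) (r β : ℝ) (hβ : 0 ≤ β) (hrβ : β ≤ r)
    (N M L : ℕ)
    (hN : (N : ℝ) = (2 : ℝ) ^ ((n : ℝ) * r))
    (hM : (M : ℝ) = (2 : ℝ) ^ ((n : ℝ) * (r - β)))
    (hL : (L : ℝ) = (2 : ℝ) ^ (2 * (n : ℝ) * β))
    (hMN : M ≤ N)
    {Mt Mc : Type} [Fintype Mt] [Fintype Mc]
    (hcardMt : Fintype.card Mt = M) (hcardMc : Fintype.card Mc = N) :
    (Nat.card {G : Fin L → (Mt ↪ Mc) //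
        ∃ m : Mc, (2 : ℝ) ^ (1 + (n : ℝ) * β) <
          (Nat.card {j : Fin L // m ∈ Set.range (G j)} : ℝ)} : ℝ)
      / (Nat.card (Fin L → (Mt ↪ Mc)))
      ≤ (2 : ℝ) ^ ((n : ℝ) * r) *
          Real.exp (-(2 * Real.log 2 - 1) * (2 : ℝ) ^ ((n : ℝ) * β)) :=
  statement19_general n r β N M L hN hM hL hcardMt hcardMc
end
end
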